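/- arXiv:1104.2686 — 8 statements merged into one kernel-verified Lean document; each statement's English description precedes it below -/
import Mathlib

section
/- Let p ∈ [1,∞) and let f : X × X × ℝⁿ × ℝⁿ → [0,∞) be measurable. If ∫_X ∫_X f(x,y,u(x),u(y)) dx dy < ∞ for every u ∈ L^p(X;ℝⁿ), then ∫_X ∫_X f(x,y,φ(x),ψ(y)) dx dy < ∞ for every pair of functions φ, ψ ∈ L^p(X;ℝⁿ). -/
/-!
Write `F (x, y) = f x y (φ x) (ψ y)` and `μ` for Lebesgue measure on `X`. Testing the hypothesis
on `u = φ` on `S`, `u = ψ` off `S`, shows that `Φ S = ∫_{S × Sᶜ} F d(μ ⊗ μ)` is finite for every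
measurable `S`. Truncating `F` at height `R` makes `Φ` Lipschitz for the complete pseudometric
`μ (S ∆ S')` on measurable sets, so a Baire category argument bounds `Φ ≤ N` on a ball
`μ (S ∆ S₀) < δ`. Modifying `S₀` inside a set `W` with `μ W < δ` bounds `∫_{A × (W \ A)} F ≤ N`
for all `A ⊆ W`; averaging over all unions of dyadic cubes of a fixed size, and letting the size
tend to zero, gives `∫_{W × W} F ≤ 4 N` because the diagonal is null. Finally `X` is covered by
finitely many dyadic cubes of measure `< δ / 2`.
-/

open MeasureTheory ENNReal Filter Topology
open scoped symmDiff Finset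

theorem Finset.four_mul_card_filter_mem_notMem_powerset {β : Type*} [DecidableEq β]
    {T : Finset β} {a b : β} (ha : a ∈ T) (hb : b ∈ T) (hab : a ≠ b) :
    4 * #{σ ∈ T.powerset | a ∈ σ ∧ b ∉ σ} = 2 ^ #T := by
  set T' := (T.erase a).erase b
  have hfilter : {σ ∈ T.powerset | a ∈ σ ∧ b ∉ σ} = T'.powerset.image (insert a) := by
    ext σ
    simp only [mem_filter, mem_powerset, mem_image, T']
    constructor
    · rintro ⟨hσT, haσ, hbσ⟩
      exact ⟨σ.erase a, fun x hx => by grind, insert_erase haσ⟩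
    · rintro ⟨τ, hτ, rfl⟩
      refine ⟨insert_subset ha (hτ.trans ((erase_subset _ _).trans (erase_subset _ _))),
        mem_insert_self _ _, fun hbτ => ?_⟩
      grind
  have hinj : Set.InjOn (insert a) (T'.powerset : Set (Finset β)) := by
    intro τ₁ h₁ τ₂ h₂ h
    have ha₁ : a ∉ τ₁ := fun h => by simpa [T'] using mem_powerset.mp h₁ h
    have ha₂ : a ∉ τ₂ := fun h => by simpa [T'] using mem_powerset.mp h₂ h
    rw [← erase_insert ha₁, ← erase_insert ha₂, h]
  have hcard : #T' + 2 = #T := by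
    have := card_erase_add_one ha
    have := card_erase_add_one (mem_erase.mpr ⟨hab.symm, hb⟩)
    simp only [T']
    omega
  rw [hfilter, card_image_of_injOn hinj, card_powerset, ← hcard, pow_add]
  ring

theorem MeasureTheory.Measure.prod_diagonal_eq_zero {α : Type*} [MeasurableSpace α]
    [MeasurableEq α] (μ : Measure α) [SFinite μ] [NullSingletonClass μ] :
    μ.prod μ (Set.diagonal α) = 0 := by
  rw [Measure.prod_apply measurableSet_diagonal]
  simp [Set.preimage, Set.diagonal]

theorem iSup_lintegral_min_natCast {β : Type*} [MeasurableSpace β] {ν : Measure β}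
    {F : β → ℝ≥0∞} (hF : Measurable F) :
    ⨆ R : ℕ, ∫⁻ z, min (F z) R ∂ν = ∫⁻ z, F z ∂ν := by
  rw [← lintegral_iSup (fun R => hF.min measurable_const)
    fun R R' h z => min_le_min_left _ (Nat.cast_le.mpr h)]
  congr with z
  rw [← inf_iSup_eq, ENNReal.iSup_natCast, inf_top_eq]

section
variable {α : Type*} [MeasurableSpace α] {μ : Measure α}

theorem measure_liminf_symmDiff_le {A : ℕ → Set α} {e : ℕ → ℝ≥0∞} (he : Antitone e)
    (hA : ∀ k, μ (A (k + 1) ∆ A k) ≤ 2⁻¹ ^ (k + 1) * e k) (j : ℕ) :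
    μ ((⋃ k, ⋂ i ≥ k, A i) ∆ A j) ≤ e j := by
  have hsub : (⋃ k, ⋂ i ≥ k, A i) ∆ A j ⊆ ⋃ t, A (j + t + 1) ∆ A (j + t) := by
    intro x hx
    by_contra hx'
    simp only [Set.mem_iUnion, Set.mem_symmDiff, not_exists] at hx'
    have hconst (t : ℕ) : x ∈ A (j + t) ↔ x ∈ A j := by
      induction t with
      | zero => rfl
      | succ t ih => rw [← ih, ← add_assoc]; specialize hx' t; tauto
    simp only [Set.mem_symmDiff, Set.mem_iUnion, Set.mem_iInter] at hx
    rcases hx with ⟨⟨k, hk⟩, hxj⟩ | ⟨hxj, hL⟩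
    · exact hxj ((hconst k).mp (hk _ (Nat.le_add_left k j)))
    · refine hL ⟨j, fun i hi => ?_⟩
      obtain ⟨t, rfl⟩ := Nat.exists_eq_add_of_le hi
      exact (hconst t).mpr hxj
  calc μ ((⋃ k, ⋂ i ≥ k, A i) ∆ A j) ≤ ∑' t, μ (A (j + t + 1) ∆ A (j + t)) :=
        (measure_mono hsub).trans (measure_iUnion_le _)
    _ ≤ ∑' t, 2⁻¹ ^ (t + 1) * e j := ENNReal.tsum_le_tsum fun t => (hA (j + t)).trans <|
        mul_le_mul' (pow_le_pow_of_le_one zero_le (by norm_num) (by omega))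
          (he (Nat.le_add_right j t))
    _ = e j := by
        rw [ENNReal.tsum_mul_right, ENNReal.tsum_geometric_add_one, ENNReal.one_sub_inv_two,
          inv_inv, ENNReal.inv_mul_cancel two_ne_zero ofNat_ne_top, one_mul]

theorem setLIntegral_prod_compl_le_add_measure_symmDiff [SFinite μ] {G : α × α → ℝ≥0∞} {R : ℝ≥0∞}
    (hGR : ∀ z, G z ≤ R) (S S' : Set α) :
    ∫⁻ z in S ×ˢ Sᶜ, G z ∂μ.prod μ ≤
      ∫⁻ z in S' ×ˢ S'ᶜ, G z ∂μ.prod μ + 2 * R * μ Set.univ * μ (S ∆ S') := by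
  have hsub : S ×ˢ Sᶜ ⊆ S' ×ˢ S'ᶜ ∪ ((S ∆ S') ×ˢ Set.univ ∪ Set.univ ×ˢ (S ∆ S')) := by
    rintro ⟨x, y⟩ ⟨hx, hy⟩
    by_cases hx' : x ∈ S' <;> by_cases hy' : y ∈ S' <;> simp_all [Set.mem_symmDiff]
  have hconst (s : Set (α × α)) : ∫⁻ z in s, G z ∂μ.prod μ ≤ R * μ.prod μ s :=
    (lintegral_mono hGR).trans_eq (setLIntegral_const _ _)
  calc ∫⁻ z in S ×ˢ Sᶜ, G z ∂μ.prod μ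
      ≤ ∫⁻ z in S' ×ˢ S'ᶜ, G z ∂μ.prod μ + (∫⁻ z in (S ∆ S') ×ˢ Set.univ, G z ∂μ.prod μ
          + ∫⁻ z in Set.univ ×ˢ (S ∆ S'), G z ∂μ.prod μ) :=
        (lintegral_mono_set hsub).trans <|
          (lintegral_union_le _ _ _).trans (add_le_add_right (lintegral_union_le _ _ _) _)
    _ ≤ ∫⁻ z in S' ×ˢ S'ᶜ, G z ∂μ.prod μ + (R * μ.prod μ ((S ∆ S') ×ˢ Set.univ)
          + R * μ.prod μ (Set.univ ×ˢ (S ∆ S'))) := by gcongr <;> exact hconst _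
    _ = ∫⁻ z in S' ×ˢ S'ᶜ, G z ∂μ.prod μ + 2 * R * μ Set.univ * μ (S ∆ S') := by
        rw [Measure.prod_prod, Measure.prod_prod]
        ring

theorem exists_ball_setLIntegral_prod_compl_le [IsFiniteMeasure μ] {F : α × α → ℝ≥0∞}
    (hF : Measurable F) (hfin : ∀ S, MeasurableSet S → ∫⁻ z in S ×ˢ Sᶜ, F z ∂μ.prod μ < ∞) :
    ∃ S₀, MeasurableSet S₀ ∧ ∃ δ > 0, ∃ N < ∞, ∀ S, MeasurableSet S → μ (S ∆ S₀) < δ →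
      ∫⁻ z in S ×ˢ Sᶜ, F z ∂μ.prod μ ≤ N := by
  by_contra! hcon
  let Φ (R : ℕ) (S : Set α) : ℝ≥0∞ := ∫⁻ z in S ×ˢ Sᶜ, min (F z) R ∂μ.prod μ
  -- the radius around `S` on which `Φ R` moves by at most `1`
  let ε (R : ℕ) : ℝ≥0∞ := (2 * R * μ Set.univ)⁻¹
  have hε_pos (k R : ℕ) : 0 < 2⁻¹ ^ (k + 1) * ε R :=
    ENNReal.mul_pos (pow_ne_zero _ (by simp)) (ENNReal.inv_ne_zero.mpr (by finiteness))
  have step (k : ℕ) (p : {S : Set α // MeasurableSet S} × ℕ) :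
      ∃ q : {S : Set α // MeasurableSet S} × ℕ,
        p.2 ≤ q.2 ∧ μ (q.1 ∆ p.1) < 2⁻¹ ^ (k + 1) * ε p.2 ∧ k < Φ q.2 q.1 := by
    obtain ⟨S, hS, hclose, hbig⟩ := hcon p.1 p.1.2 _ (hε_pos k p.2) k (natCast_lt_top k)
    obtain ⟨R, hR⟩ := lt_iSup_iff.mp ((iSup_lintegral_min_natCast hF).symm ▸ hbig)
    exact ⟨(⟨S, hS⟩, max R p.2), le_max_right _ _, hclose,
      hR.trans_le (lintegral_mono fun z => min_le_min_left _ (Nat.cast_le.mpr (le_max_left _ _)))⟩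
  choose next hR hclose hbig using step
  let seq (k : ℕ) : {S : Set α // MeasurableSet S} × ℕ := Nat.rec (⟨∅, .empty⟩, 0) next k
  set L := ⋃ k, ⋂ i ≥ k, ((seq i).1 : Set α)
  have hL : MeasurableSet L := .iUnion fun k => .iInter fun i => .iInter fun _ => (seq i).1.2
  have hR_mono : Monotone fun k => (seq k).2 := monotone_nat_of_le_succ fun k => hR k (seq k)
  have hstep (k : ℕ) : μ (((seq (k + 1)).1 : Set α) ∆ (seq k).1) ≤ 2⁻¹ ^ (k + 1) * ε (seq k).2 :=
    (hclose k (seq k)).le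
  have hε_anti : Antitone fun k => ε (seq k).2 := fun i j hij =>
    ENNReal.inv_le_inv.mpr (by gcongr; exact hR_mono hij)
  have hL_close (j : ℕ) : μ ((seq j).1 ∆ L) ≤ ε (seq j).2 := by
    rw [symmDiff_comm]
    exact measure_liminf_symmDiff_le hε_anti hstep j
  have hbound (k : ℕ) : (k : ℝ≥0∞) < ∫⁻ z in L ×ˢ Lᶜ, F z ∂μ.prod μ + 1 := by
    set R := (seq (k + 1)).2
    calc (k : ℝ≥0∞) < Φ R (seq (k + 1)).1 := hbig k (seq k)
      _ ≤ Φ R L + 2 * R * μ Set.univ * μ ((seq (k + 1)).1 ∆ L) :=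
          setLIntegral_prod_compl_le_add_measure_symmDiff (fun z => min_le_right _ _) _ _
      _ ≤ ∫⁻ z in L ×ˢ Lᶜ, F z ∂μ.prod μ + 1 := by
          gcongr
          · exact lintegral_mono fun z => min_le_left _ _
          · calc 2 * R * μ Set.univ * μ ((seq (k + 1)).1 ∆ L) ≤ 2 * R * μ Set.univ * ε R := by
                  gcongr; exact hL_close (k + 1)
              _ ≤ 1 := ENNReal.mul_inv_le_one _
  obtain ⟨k, hk⟩ := ENNReal.exists_nat_gt (ENNReal.add_ne_top.mpr ⟨(hfin L hL).ne, one_ne_top⟩)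
  exact lt_asymm hk (hbound k)

theorem setLIntegral_prod_diff_le_of_ball {ν : Measure (α × α)} {F : α × α → ℝ≥0∞}
    {S₀ : Set α} (hS₀ : MeasurableSet S₀) {δ N : ℝ≥0∞}
    (hball : ∀ S, MeasurableSet S → μ (S ∆ S₀) < δ → ∫⁻ z in S ×ˢ Sᶜ, F z ∂ν ≤ N)
    {W A : Set α} (hW : MeasurableSet W) (hA : MeasurableSet A) (hAW : A ⊆ W) (hWδ : μ W < δ) :
    ∫⁻ z in A ×ˢ (W \ A), F z ∂ν ≤ N := by
  -- modify `S₀` only inside `W`, so as to separate `A` from the rest of `W`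
  set S := S₀ \ W ∪ A
  have hsub : A ×ˢ (W \ A) ⊆ S ×ˢ Sᶜ :=
    Set.prod_mono Set.subset_union_right fun y ⟨hyW, hyA⟩ h => by grind
  have hSS₀ : S ∆ S₀ ⊆ W := fun x hx => by grind
  exact (lintegral_mono_set hsub).trans
    (hball S ((hS₀.diff hW).union hA) ((measure_mono hSS₀).trans_lt hWδ))

theorem setLIntegral_prod_cell_ne_le {ν : Measure (α × α)} {F : α × α → ℝ≥0∞}
    (hF : Measurable F) {β : Type*} [MeasurableSpace β] [MeasurableEq β] {c : α → β}
    (hc : Measurable c) {W : Set α} (hW : MeasurableSet W) {T : Finset β}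
    (hT : ∀ x ∈ W, c x ∈ T) {N : ℝ≥0∞}
    (hN : ∀ σ ⊆ T, ∫⁻ z in (W ∩ c ⁻¹' σ) ×ˢ (W \ c ⁻¹' σ), F z ∂ν ≤ N) :
    ∫⁻ z in W ×ˢ W ∩ {z | c z.1 ≠ c z.2}, F z ∂ν ≤ 4 * N := by
  classical
  set E := W ×ˢ W ∩ {z | c z.1 ≠ c z.2}
  set B : Finset β → Set (α × α) := fun σ => (W ∩ c ⁻¹' σ) ×ˢ (W \ c ⁻¹' σ)
  have hE : MeasurableSet E := (hW.prod hW).inter (measurableSet_eq_fun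
    (hc.comp measurable_fst) (hc.comp measurable_snd)).compl
  have hB (σ : Finset β) : MeasurableSet (B σ) :=
    (hW.inter (hc σ.measurableSet)).prod (hW.diff (hc σ.measurableSet))
  -- a pair in two different cells is separated by a quarter of all subsets of `T`
  have hpoint (z : α × α) :
      2 ^ #T * E.indicator F z ≤ 4 * ∑ σ ∈ T.powerset, (B σ).indicator F z := by
    by_cases hz : z ∈ E
    · obtain ⟨⟨hz₁, hz₂⟩, hne⟩ := id hz
      have hsum : ∑ σ ∈ T.powerset, (B σ).indicator F z =
          #{σ ∈ T.powerset | c z.1 ∈ σ ∧ c z.2 ∉ σ} * F z := by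
        simp [B, Set.indicator_apply, hz₁, hz₂, Finset.sum_ite, Finset.sum_const, nsmul_eq_mul]
      have hcount : (4 : ℝ≥0∞) * #{σ ∈ T.powerset | c z.1 ∈ σ ∧ c z.2 ∉ σ} = 2 ^ #T := by
        exact_mod_cast Finset.four_mul_card_filter_mem_notMem_powerset (hT _ hz₁) (hT _ hz₂) hne
      rw [Set.indicator_of_mem hz, hsum, ← mul_assoc, hcount]
    · simp [Set.indicator_of_notMem hz]
  have hT_ne : (2 : ℝ≥0∞) ^ #T ≠ 0 := pow_ne_zero _ two_ne_zero
  have hT_top : (2 : ℝ≥0∞) ^ #T ≠ ∞ := pow_ne_top ofNat_ne_top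
  rw [← ENNReal.mul_le_mul_iff_right hT_ne hT_top]
  calc 2 ^ #T * ∫⁻ z in E, F z ∂ν = ∫⁻ z, 2 ^ #T * E.indicator F z ∂ν := by
        rw [lintegral_const_mul' _ _ hT_top, lintegral_indicator hE]
    _ ≤ ∫⁻ z, 4 * ∑ σ ∈ T.powerset, (B σ).indicator F z ∂ν := lintegral_mono hpoint
    _ = 4 * ∑ σ ∈ T.powerset, ∫⁻ z in B σ, F z ∂ν := by
        rw [lintegral_const_mul' _ _ (by simp),
          lintegral_finsetSum _ fun σ _ => hF.indicator (hB σ)]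
        simp only [lintegral_indicator (hB _)]
    _ ≤ 4 * ∑ σ ∈ T.powerset, N := by
        gcongr with σ hσ
        exact hN σ (Finset.mem_powerset.mp hσ)
    _ = 2 ^ #T * (4 * N) := by
        rw [Finset.sum_const, Finset.card_powerset, nsmul_eq_mul]
        push_cast
        ring

theorem lintegral_prod_restrict_lt_top_of_cover [SFinite μ] {X : Set α} (hX : MeasurableSet X)
    {κ : Type*} [Fintype κ] {P : κ → Set α} (hcover : X ⊆ ⋃ i, P i) {F : α × α → ℝ≥0∞}
    (hP : ∀ i j, ∫⁻ z in P i ×ˢ P j, F z ∂(μ.restrict X).prod (μ.restrict X) < ∞) :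
    ∫⁻ z, F z ∂(μ.restrict X).prod (μ.restrict X) < ∞ := by
  set ν := (μ.restrict X).prod (μ.restrict X)
  have hν : ν.restrict (X ×ˢ X) = ν := by
    rw [← Measure.prod_restrict, Measure.restrict_restrict hX, Set.inter_self]
  have hcover₂ : X ×ˢ X ⊆ ⋃ q : κ × κ, P q.1 ×ˢ P q.2 := fun z ⟨hx, hy⟩ => by
    obtain ⟨i, hi⟩ := Set.mem_iUnion.mp (hcover hx)
    obtain ⟨j, hj⟩ := Set.mem_iUnion.mp (hcover hy)
    exact Set.mem_iUnion.mpr ⟨(i, j), hi, hj⟩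
  calc ∫⁻ z, F z ∂ν = ∫⁻ z in X ×ˢ X, F z ∂ν := by rw [hν]
    _ ≤ ∑' q : κ × κ, ∫⁻ z in P q.1 ×ˢ P q.2, F z ∂ν :=
      (lintegral_mono_set hcover₂).trans (lintegral_iUnion_le _ _)
    _ = ∑ q : κ × κ, ∫⁻ z in P q.1 ×ˢ P q.2, F z ∂ν := tsum_fintype _
    _ < ∞ := ENNReal.sum_lt_top.mpr fun q _ => hP q.1 q.2

theorem setLIntegral_prod_compl_le_lintegral_piecewise [SFinite μ] {E : Type*}
    (g : α → α → E → E → ℝ≥0∞) (φ ψ : α → E) {S : Set α} (hS : MeasurableSet S)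
    [DecidablePred (· ∈ S)] :
    ∫⁻ z in S ×ˢ Sᶜ, g z.1 z.2 (φ z.1) (ψ z.2) ∂μ.prod μ ≤
      ∫⁻ x, ∫⁻ y, g x y (S.piecewise φ ψ x) (S.piecewise φ ψ y) ∂μ ∂μ := calc
  _ = ∫⁻ z in S ×ˢ Sᶜ, g z.1 z.2 (S.piecewise φ ψ z.1) (S.piecewise φ ψ z.2) ∂μ.prod μ :=
    setLIntegral_congr_fun (hS.prod hS.compl) fun z ⟨h₁, h₂⟩ => by
      rw [Set.piecewise_eq_of_mem _ _ _ h₁, Set.piecewise_eq_of_notMem _ _ _ h₂]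
  _ ≤ ∫⁻ z, g z.1 z.2 (S.piecewise φ ψ z.1) (S.piecewise φ ψ z.2) ∂μ.prod μ :=
    setLIntegral_le_lintegral _ _
  _ ≤ _ := lintegral_prod_le _

end

section
variable {ι : Type*}

noncomputable def dyadicCell (k : ℕ) (x : ι → ℝ) : ι → ℤ := fun i => ⌊2 ^ k * x i⌋

theorem measurable_dyadicCell (k : ℕ) : Measurable (dyadicCell (ι := ι) k) :=
  measurable_pi_lambda _ fun i => (measurable_const.mul (measurable_pi_apply i)).floor

theorem dyadicCell_eq_of_le {k l : ℕ} (hkl : k ≤ l) {x y : ι → ℝ}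
    (h : dyadicCell l x = dyadicCell l y) : dyadicCell k x = dyadicCell k y := by
  obtain ⟨j, rfl⟩ := Nat.exists_eq_add_of_le hkl
  have coarsen (t : ℝ) : ⌊(2 : ℝ) ^ k * t⌋ = ⌊2 ^ (k + j) * t⌋ / (2 ^ j : ℕ) := by
    rw [← Int.floor_div_natCast, pow_add, Nat.cast_pow, Nat.cast_ofNat]
    field_simp
  funext i
  rw [dyadicCell, dyadicCell, coarsen, coarsen]
  exact congrArg (· / ((2 ^ j : ℕ) : ℤ)) (congrFun h i)

theorem exists_dyadicCell_ne {x y : ι → ℝ} (h : x ≠ y) : ∃ k, dyadicCell k x ≠ dyadicCell k y := by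
  obtain ⟨i, hi⟩ := Function.ne_iff.mp h
  have hpos : 0 < |x i - y i| := abs_pos.mpr (sub_ne_zero.mpr hi)
  obtain ⟨k, hk⟩ := pow_unbounded_of_one_lt |x i - y i|⁻¹ one_lt_two
  refine ⟨k, fun hxy => ?_⟩
  have := Int.abs_sub_lt_one_of_floor_eq_floor (congrFun hxy i)
  rw [← mul_sub, abs_mul, abs_of_pos (by positivity)] at this
  rw [inv_lt_iff_one_lt_mul₀ hpos] at hk
  linarith

theorem Bornology.IsBounded.finite_image_dyadicCell [Fintype ι] {X : Set (ι → ℝ)}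
    (hX : IsBounded X) (k : ℕ) : (dyadicCell k '' X).Finite := by
  classical
  obtain ⟨ρ, hρ⟩ := hX.exists_norm_le
  refine (Set.finite_Icc (fun _ => -⌈2 ^ k * ρ⌉) (fun _ => ⌈2 ^ k * ρ⌉)).subset ?_
  rintro _ ⟨x, hx, rfl⟩
  have hxi (i : ι) : |2 ^ k * x i| ≤ 2 ^ k * ρ := by
    rw [abs_mul, abs_of_pos (by positivity)]
    exact mul_le_mul_of_nonneg_left ((norm_le_pi_norm x i).trans (hρ x hx)) (by positivity)
  refine ⟨fun i => ?_, fun i => ?_⟩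
  · rw [← Int.floor_neg]
    exact Int.floor_mono (neg_le_of_abs_le (hxi i))
  · exact (Int.floor_mono (le_of_abs_le (hxi i))).trans (Int.floor_le_ceil _)

theorem volume_preimage_dyadicCell [Fintype ι] (k : ℕ) (d : ι → ℤ) :
    volume (dyadicCell k ⁻¹' {d}) = 2⁻¹ ^ (k * Fintype.card ι) := by
  have hcell : dyadicCell k ⁻¹' {d} =
      Set.univ.pi fun i => (fun t : ℝ => 2 ^ k * t) ⁻¹' Set.Ico (d i : ℝ) (d i + 1) := by
    ext x
    simp only [Set.mem_preimage, Set.mem_singleton_iff, Set.mem_pi, Set.mem_univ, true_implies,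
      Set.mem_Ico, funext_iff, dyadicCell, Int.floor_eq_iff]
  rw [hcell, volume_pi_pi]
  simp_rw [Real.volume_preimage_mul_left (by positivity : (2 : ℝ) ^ k ≠ 0), Real.volume_Ico]
  simp [pow_mul, ENNReal.inv_pow]

variable [Fintype ι]

theorem setLIntegral_prod_self_le_of_forall_subset {μ : Measure (ι → ℝ)} [SFinite μ]
    [NullSingletonClass μ] {F : (ι → ℝ) × (ι → ℝ) → ℝ≥0∞} (hF : Measurable F)
    {W : Set (ι → ℝ)} (hW : MeasurableSet W) (hWb : Bornology.IsBounded W) {N : ℝ≥0∞}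
    (hN : ∀ A ⊆ W, MeasurableSet A → ∫⁻ z in A ×ˢ (W \ A), F z ∂μ.prod μ ≤ N) :
    ∫⁻ z in W ×ˢ W, F z ∂μ.prod μ ≤ 4 * N := by
  set E : ℕ → Set ((ι → ℝ) × (ι → ℝ)) :=
    fun k => W ×ˢ W ∩ {z | dyadicCell k z.1 ≠ dyadicCell k z.2}
  have hE (k : ℕ) : ∫⁻ z in E k, F z ∂μ.prod μ ≤ 4 * N := by
    refine setLIntegral_prod_cell_ne_le hF (measurable_dyadicCell k) hW
      (T := (hWb.finite_image_dyadicCell k).toFinset) (fun x hx => by simpa using ⟨x, hx, rfl⟩)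
      fun σ _ => ?_
    rw [← Set.sdiff_self_inter]
    exact hN _ Set.inter_subset_left (hW.inter (measurable_dyadicCell k σ.measurableSet))
  have hE_mono : Monotone E := fun k l hkl z ⟨hzW, hz⟩ =>
    ⟨hzW, fun h => hz (dyadicCell_eq_of_le hkl h)⟩
  have hcover : W ×ˢ W ⊆ (⋃ k, E k) ∪ Set.diagonal _ := by
    intro z hz
    by_cases h : z.1 = z.2
    · exact Or.inr h
    · obtain ⟨k, hk⟩ := exists_dyadicCell_ne h
      exact Or.inl (Set.mem_iUnion.mpr ⟨k, hz, hk⟩)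
  calc ∫⁻ z in W ×ˢ W, F z ∂μ.prod μ
      ≤ ∫⁻ z in ⋃ k, E k, F z ∂μ.prod μ + ∫⁻ z in Set.diagonal _, F z ∂μ.prod μ :=
        (lintegral_mono_set hcover).trans (lintegral_union_le _ _ _)
    _ = ⨆ k, ∫⁻ z in E k, F z ∂μ.prod μ := by
        rw [setLIntegral_measure_zero _ _ (Measure.prod_diagonal_eq_zero μ), add_zero,
          setLIntegral_iUnion_of_directed _ hE_mono.directed_le]
    _ ≤ 4 * N := iSup_le hE

theorem lintegral_prod_lt_top_of_forall_setLIntegral_prod_compl_lt_top [Nonempty ι]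
    {X : Set (ι → ℝ)} (hX : MeasurableSet X) (hXb : Bornology.IsBounded X)
    {F : (ι → ℝ) × (ι → ℝ) → ℝ≥0∞} (hF : Measurable F)
    (hfin : ∀ S, MeasurableSet S →
      ∫⁻ z in S ×ˢ Sᶜ, F z ∂(volume.restrict X).prod (volume.restrict X) < ∞) :
    ∫⁻ z, F z ∂(volume.restrict X).prod (volume.restrict X) < ∞ := by
  set μ := volume.restrict X
  have : IsFiniteMeasure μ := ⟨by simpa [μ] using hXb.measure_lt_top⟩
  obtain ⟨S₀, hS₀, δ, hδ, N, hN, hball⟩ := exists_ball_setLIntegral_prod_compl_le hF hfin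
  obtain ⟨k, hk⟩ := ENNReal.exists_inv_two_pow_lt hδ.ne'
  set c := dyadicCell (ι := ι) (k + 1)
  set T := (hXb.finite_image_dyadicCell (k + 1)).toFinset
  set P : T → Set (ι → ℝ) := fun d => X ∩ c ⁻¹' {d.1}
  have hP (d : T) : MeasurableSet (P d) :=
    hX.inter (measurable_dyadicCell _ (measurableSet_singleton _))
  have hPμ (d : T) : μ (P d) ≤ 2⁻¹ ^ (k + 1) := calc
    μ (P d) ≤ volume (c ⁻¹' {d.1}) :=
      (Measure.restrict_le_self _).trans (measure_mono Set.inter_subset_right)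
    _ = 2⁻¹ ^ ((k + 1) * Fintype.card ι) := volume_preimage_dyadicCell _ _
    _ ≤ 2⁻¹ ^ (k + 1) := pow_le_pow_of_le_one zero_le (by norm_num)
      (Nat.le_mul_of_pos_right _ Fintype.card_pos)
  refine lintegral_prod_restrict_lt_top_of_cover hX (P := P)
    (fun x hx => Set.mem_iUnion.mpr ⟨⟨c x, by simpa [T] using ⟨x, hx, rfl⟩⟩, hx, rfl⟩)
    fun d e => ?_
  have hW : MeasurableSet (P d ∪ P e) := (hP d).union (hP e)
  have hWδ : μ (P d ∪ P e) < δ := calc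
    μ (P d ∪ P e) ≤ 2⁻¹ ^ (k + 1) + 2⁻¹ ^ (k + 1) :=
      (measure_union_le _ _).trans (add_le_add (hPμ d) (hPμ e))
    _ = 2⁻¹ ^ k := by rw [pow_succ, ← mul_add, ENNReal.inv_two_add_inv_two, mul_one]
    _ < δ := hk
  calc ∫⁻ z in P d ×ˢ P e, F z ∂μ.prod μ ≤ ∫⁻ z in (P d ∪ P e) ×ˢ (P d ∪ P e), F z ∂μ.prod μ :=
        lintegral_mono_set (Set.prod_mono Set.subset_union_left Set.subset_union_right)
    _ ≤ 4 * N := setLIntegral_prod_self_le_of_forall_subset hF hW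
        (hXb.subset (Set.union_subset Set.inter_subset_left Set.inter_subset_left))
        fun A hA hAm => setLIntegral_prod_diff_le_of_ball hS₀ hball hW hAm hA hWδ
    _ < ∞ := by finiteness

end

theorem stmt_0_general (m n : ℕ) (hm : 0 < m)
    (X : Set (Fin m → ℝ)) (hXmeas : MeasurableSet X) (hXbdd : Bornology.IsBounded X)
    (p : ℝ)
    (f : (Fin m → ℝ) → (Fin m → ℝ) → EuclideanSpace ℝ (Fin n) → EuclideanSpace ℝ (Fin n) → ℝ)
    (hfmeas : Measurable (fun q : ((Fin m → ℝ) × (Fin m → ℝ)) ×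
      (EuclideanSpace ℝ (Fin n)) × (EuclideanSpace ℝ (Fin n)) => f q.1.1 q.1.2 q.2.1 q.2.2))
    (hfin : ∀ u : (Fin m → ℝ) → EuclideanSpace ℝ (Fin n),
      MemLp u (ENNReal.ofReal p) (volume.restrict X) →
      ∫⁻ x, ∫⁻ y, ENNReal.ofReal (f x y (u x) (u y))
        ∂(volume.restrict X) ∂(volume.restrict X) < ⊤) :
    ∀ φ ψ : (Fin m → ℝ) → EuclideanSpace ℝ (Fin n),
      MemLp φ (ENNReal.ofReal p) (volume.restrict X) →
      MemLp ψ (ENNReal.ofReal p) (volume.restrict X) →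
      ∫⁻ x, ∫⁻ y, ENNReal.ofReal (f x y (φ x) (ψ y))
        ∂(volume.restrict X) ∂(volume.restrict X) < ⊤ := by
  intro φ ψ hφ hψ
  set μ := volume.restrict X
  obtain ⟨φ', hφ'm, hφφ'⟩ : ∃ φ', Measurable φ' ∧ φ =ᵐ[μ] φ' :=
    ⟨_, hφ.1.stronglyMeasurable_mk.measurable, hφ.1.ae_eq_mk⟩
  obtain ⟨ψ', hψ'm, hψψ'⟩ : ∃ ψ', Measurable ψ' ∧ ψ =ᵐ[μ] ψ' :=
    ⟨_, hψ.1.stronglyMeasurable_mk.measurable, hψ.1.ae_eq_mk⟩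
  set F : (Fin m → ℝ) × (Fin m → ℝ) → ℝ≥0∞ := fun z => ENNReal.ofReal (f z.1 z.2 (φ' z.1) (ψ' z.2))
  have hF : Measurable F := ENNReal.measurable_ofReal.comp <| hfmeas.comp <|
    measurable_id.prodMk ((hφ'm.comp measurable_fst).prodMk (hψ'm.comp measurable_snd))
  have hF_eq : ∫⁻ x, ∫⁻ y, ENNReal.ofReal (f x y (φ x) (ψ y)) ∂μ ∂μ = ∫⁻ z, F z ∂μ.prod μ := by
    rw [lintegral_prod _ hF.aemeasurable]
    refine lintegral_congr_ae (hφφ'.mono fun x hx => lintegral_congr_ae (hψψ'.mono fun y hy => ?_))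
    simp only [F, hx, hy]
  have : Nonempty (Fin m) := ⟨⟨0, hm⟩⟩
  rw [hF_eq]
  refine lintegral_prod_lt_top_of_forall_setLIntegral_prod_compl_lt_top hXmeas hXbdd hF
    fun S hS => ?_
  classical
  exact (setLIntegral_prod_compl_le_lintegral_piecewise
    (fun x y w z => ENNReal.ofReal (f x y w z)) φ' ψ' hS).trans_lt
    (hfin _ (((hφ.ae_eq hφφ').restrict S).piecewise hS ((hψ.ae_eq hψψ').restrict Sᶜ)))

theorem stmt_0 (m n : ℕ) (hm : 0 < m) (hn : 0 < n)
    (X : Set (Fin m → ℝ)) (hXmeas : MeasurableSet X) (hXbdd : Bornology.IsBounded X)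
    (p : ℝ) (hp : 1 ≤ p)
    (f : (Fin m → ℝ) → (Fin m → ℝ) → EuclideanSpace ℝ (Fin n) → EuclideanSpace ℝ (Fin n) → ℝ)
    (hfmeas : Measurable (fun q : ((Fin m → ℝ) × (Fin m → ℝ)) ×
      (EuclideanSpace ℝ (Fin n)) × (EuclideanSpace ℝ (Fin n)) => f q.1.1 q.1.2 q.2.1 q.2.2))
    (hfnonneg : ∀ x y w z, 0 ≤ f x y w z)
    (hfin : ∀ u : (Fin m → ℝ) → EuclideanSpace ℝ (Fin n),
      MemLp u (ENNReal.ofReal p) (volume.restrict X) →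
      ∫⁻ x, ∫⁻ y, ENNReal.ofReal (f x y (u x) (u y))
        ∂(volume.restrict X) ∂(volume.restrict X) < ⊤) :
    ∀ φ ψ : (Fin m → ℝ) → EuclideanSpace ℝ (Fin n),
      MemLp φ (ENNReal.ofReal p) (volume.restrict X) →
      MemLp ψ (ENNReal.ofReal p) (volume.restrict X) →
      ∫⁻ x, ∫⁻ y, ENNReal.ofReal (f x y (φ x) (ψ y))
        ∂(volume.restrict X) ∂(volume.restrict X) < ⊤ :=
  stmt_0_general m n hm X hXmeas hXbdd p f hfmeas hfin
end

section
/- Let p ∈ [1,∞) and let f : X × X × ℝⁿ × ℝⁿ → [0,∞) be measurable and p-bounded, i.e. there exist a constant C > 0 and nonnegative functions α ∈ L^1(X×X) and β ∈ L^1(X) with f(x,y,w,z) ≤ α(x,y) + β(x)|z|^p + β(y)|w|^p + C|w|^p|z|^p for almost all (x,y) ∈ X×X and all w, z ∈ ℝⁿ. Then ∫_X ∫_X f(x,y,u(x),u(y)) dx dy < ∞ for every u ∈ L^p(X;ℝⁿ). -/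
/-! The integrand is dominated, almost everywhere on `X × X`, by
`α(x,y) + β(x)‖u(y)‖^p + β(y)‖u(x)‖^p + C‖u(x)‖^p‖u(y)‖^p`.
Since `‖u‖^p` and `β` are integrable on `X`, every summand is integrable on `X × X`: the mixed
terms are products of integrable functions of separate variables. By Tonelli the iterated integral
of the majorant is its (finite) integral over the product. -/

open MeasureTheory ENNReal Filter Topology

namespace MeasureTheory

variable {ι κ : Type*} [MeasurableSpace ι] [MeasurableSpace κ] {μ : Measure ι} {ν : Measure κ}

theorem Integrable.add_mul_prod_add_mul_prod_add_mul_mul_prod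
    {a : ι × ι → ℝ} {b g : ι → ℝ} (C : ℝ) (ha : Integrable a (μ.prod μ)) (hb : Integrable b μ)
    (hg : Integrable g μ) :
    Integrable (fun q : ι × ι => a q + b q.1 * g q.2 + b q.2 * g q.1 + C * g q.1 * g q.2)
      (μ.prod μ) := by
  have hbg : Integrable (fun q : ι × ι => b q.1 * g q.2) (μ.prod μ) := hb.mul_prod hg
  have hgb : Integrable (fun q : ι × ι => b q.2 * g q.1) (μ.prod μ) := by
    simpa only [mul_comm] using hg.mul_prod hb
  have hgg : Integrable (fun q : ι × ι => C * g q.1 * g q.2) (μ.prod μ) := by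
    simpa only [mul_assoc] using (hg.mul_prod hg).const_mul C
  exact ((ha.add hbg).add hgb).add hgg

theorem lintegral_lintegral_ofReal_lt_top_of_ae_le [SFinite ν] {F : ι → κ → ℝ} {G : ι × κ → ℝ}
    (hG : Integrable G (μ.prod ν)) (hFG : ∀ᵐ q ∂μ.prod ν, F q.1 q.2 ≤ G q) :
    ∫⁻ x, ∫⁻ y, ENNReal.ofReal (F x y) ∂ν ∂μ < ⊤ := by
  have hle : ∫⁻ x, ∫⁻ y, ENNReal.ofReal (F x y) ∂ν ∂μ
      ≤ ∫⁻ x, ∫⁻ y, ENNReal.ofReal (G (x, y)) ∂ν ∂μ := by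
    refine lintegral_mono_ae ?_
    filter_upwards [Measure.ae_ae_of_ae_prod hFG] with x hx
    exact lintegral_mono_ae (hx.mono fun y hy => ENNReal.ofReal_le_ofReal hy)
  rw [← lintegral_prod _ hG.aemeasurable.ennreal_ofReal] at hle
  exact hle.trans_lt hG.lintegral_lt_top

theorem MemLp.integrable_norm_rpow_ofReal {E : Type*} [NormedAddCommGroup E] {u : ι → E} {p : ℝ}
    (hu : MemLp u (ENNReal.ofReal p) μ) (hp : 0 < p) :
    Integrable (fun x => ‖u x‖ ^ p) μ := by
  simpa only [ENNReal.toReal_ofReal hp.le] using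
    hu.integrable_norm_rpow (ENNReal.ofReal_pos.mpr hp).ne' ENNReal.ofReal_ne_top

end MeasureTheory

theorem stmt_4_general (m n : ℕ)
    (X : Set (Fin m → ℝ))
    (p : ℝ) (hp : 1 ≤ p)
    (f : (Fin m → ℝ) → (Fin m → ℝ) → EuclideanSpace ℝ (Fin n) → EuclideanSpace ℝ (Fin n) → ℝ)
    (hpbdd : ∃ (C : ℝ) (α : (Fin m → ℝ) × (Fin m → ℝ) → ℝ) (β : (Fin m → ℝ) → ℝ),
      0 < C ∧ (∀ q, 0 ≤ α q) ∧ (∀ x, 0 ≤ β x) ∧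
      Integrable α ((volume.restrict X).prod (volume.restrict X)) ∧
      Integrable β (volume.restrict X) ∧
      ∀ᵐ q ∂((volume.restrict X).prod (volume.restrict X)),
        ∀ w z : EuclideanSpace ℝ (Fin n),
          f q.1 q.2 w z ≤ α q + β q.1 * ‖z‖ ^ p + β q.2 * ‖w‖ ^ p +
            C * ‖w‖ ^ p * ‖z‖ ^ p) :
    ∀ u : (Fin m → ℝ) → EuclideanSpace ℝ (Fin n),
      MemLp u (ENNReal.ofReal p) (volume.restrict X) →
      ∫⁻ x, ∫⁻ y, ENNReal.ofReal (f x y (u x) (u y))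
        ∂(volume.restrict X) ∂(volume.restrict X) < ⊤ := by
  intro u hu
  obtain ⟨C, α, β, -, -, -, hα, hβ, hbound⟩ := hpbdd
  have hup : Integrable (fun x => ‖u x‖ ^ p) (volume.restrict X) :=
    hu.integrable_norm_rpow_ofReal (zero_lt_one.trans_le hp)
  exact lintegral_lintegral_ofReal_lt_top_of_ae_le
    (hα.add_mul_prod_add_mul_prod_add_mul_mul_prod C hβ hup)
    (hbound.mono fun q hq => hq (u q.1) (u q.2))

theorem stmt_4 (m n : ℕ) (hm : 0 < m) (hn : 0 < n)
    (X : Set (Fin m → ℝ)) (hXmeas : MeasurableSet X) (hXbdd : Bornology.IsBounded X)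
    (p : ℝ) (hp : 1 ≤ p)
    (f : (Fin m → ℝ) → (Fin m → ℝ) → EuclideanSpace ℝ (Fin n) → EuclideanSpace ℝ (Fin n) → ℝ)
    (hfmeas : Measurable (fun q : ((Fin m → ℝ) × (Fin m → ℝ)) ×
      (EuclideanSpace ℝ (Fin n)) × (EuclideanSpace ℝ (Fin n)) => f q.1.1 q.1.2 q.2.1 q.2.2))
    (hfnonneg : ∀ x y w z, 0 ≤ f x y w z)
    (hpbdd : ∃ (C : ℝ) (α : (Fin m → ℝ) × (Fin m → ℝ) → ℝ) (β : (Fin m → ℝ) → ℝ),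
      0 < C ∧ (∀ q, 0 ≤ α q) ∧ (∀ x, 0 ≤ β x) ∧
      Integrable α ((volume.restrict X).prod (volume.restrict X)) ∧
      Integrable β (volume.restrict X) ∧
      ∀ᵐ q ∂((volume.restrict X).prod (volume.restrict X)),
        ∀ w z : EuclideanSpace ℝ (Fin n),
          f q.1 q.2 w z ≤ α q + β q.1 * ‖z‖ ^ p + β q.2 * ‖w‖ ^ p +
            C * ‖w‖ ^ p * ‖z‖ ^ p) :
    ∀ u : (Fin m → ℝ) → EuclideanSpace ℝ (Fin n),
      MemLp u (ENNReal.ofReal p) (volume.restrict X) →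
      ∫⁻ x, ∫⁻ y, ENNReal.ofReal (f x y (u x) (u y))
        ∂(volume.restrict X) ∂(volume.restrict X) < ⊤ :=
  stmt_4_general m n X p hp f hpbdd
end

section
/- Let p ∈ [1,∞), let X have positive Lebesgue measure, and let f : ℝⁿ × ℝⁿ → [0,∞) be Borel measurable. Then ∫_X ∫_X f(u(x),u(y)) dx dy < ∞ holds for every u ∈ L^p(X;ℝⁿ) if and only if there exists a constant C > 0 such that f(w,z) ≤ C (1 + |w|^p)(1 + |z|^p) for all w, z ∈ ℝⁿ. -/
/-!
Sufficiency: the bound factors the double integral as `C (∫_X (1 + |u|^p))²`, which is finite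
because `X` has finite measure.

Necessity: if no `C` works, pick `w_k, z_k` with
`f(w_k, z_k) > (a_{2k} a_{2k+1})⁻¹ (1 + |w_k|^p)(1 + |z_k|^p)` for a positive summable
sequence `a`, and interleave them as `v = (w_0, z_0, w_1, z_1, …)`. Lebesgue measure has no
atoms, so `X` contains disjoint slabs `D_j = X ∩ {r_j < x_0 ≤ r_{j+1}}` of any prescribed
small measures `c_j` (the `r_j` come from the intermediate value theorem); take
`c_j = a_j / (1 + |v_j|^p)`. The step function `u = v_j` on `D_j` has `∫ |u|^p ≤ ∑ a_j < ∞`,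
while each rectangle `D_{2k} × D_{2k+1}` contributes at least `1` to the double integral.
-/

open MeasureTheory ENNReal Filter Topology Set Function

theorem continuous_measure_Iic (ν : Measure ℝ) [IsFiniteMeasure ν] [NullSingletonClass ν] :
    Continuous fun r => ν (Iic r) := by
  have hreal : Continuous fun r => ∫ a, (Iic r).indicator (1 : ℝ → ℝ) a ∂ν := by
    refine continuous_iff_continuousAt.2 fun r₀ =>
      continuousAt_of_dominated (bound := fun _ => 1) (.of_forall fun r =>
        ((stronglyMeasurable_one (α := ℝ)).indicator measurableSet_Iic).aestronglyMeasurable)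
      (.of_forall fun r => .of_forall fun a => norm_indicator_le_norm_self 1 a |>.trans (by simp))
      (integrable_const 1) ?_
    -- away from the null set `{r₀}`, the integrand is locally constant in `r` near `r₀`
    filter_upwards [measure_eq_zero_iff_ae_notMem.1 (measure_singleton (μ := ν) r₀)] with a ha
    rcases lt_or_gt_of_ne ha with h | h
    · exact (continuousAt_const (y := (1 : ℝ))).congr
        (by filter_upwards [eventually_gt_nhds h] with r hr; simp [hr.le])
    · exact (continuousAt_const (y := (0 : ℝ))).congr
        (by filter_upwards [eventually_lt_nhds h] with r hr; simp [hr])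
  simp only [integral_indicator_one measurableSet_Iic] at hreal
  exact (ENNReal.continuous_ofReal.comp hreal).congr fun r =>
    ofReal_measureReal (measure_ne_top ν _)

theorem exists_measure_Iic_eq (ν : Measure ℝ) [IsFiniteMeasure ν] [NullSingletonClass ν]
    {t : ℝ≥0∞} (ht₀ : 0 < t) (ht : t < ν univ) : ∃ r, ν (Iic r) = t := by
  have hbot : Tendsto (fun r => ν (Iic r)) atBot (𝓝 0) := by
    have := tendsto_measure_iInter_atBot (μ := ν) (fun r => measurableSet_Iic.nullMeasurableSet)
      monotone_Iic ⟨0, measure_ne_top ν _⟩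
    rwa [show ⋂ r : ℝ, Iic r = ∅ by ext x; simpa using exists_lt x, measure_empty] at this
  obtain ⟨a, ha⟩ := (hbot.eventually_lt_const ht₀).exists
  obtain ⟨b, hb⟩ := ((tendsto_measure_Iic_atTop ν).eventually_const_lt ht).exists
  exact mem_range_of_exists_le_of_exists_ge (continuous_measure_Iic ν) ⟨a, ha.le⟩
    ⟨b, hb.le⟩

theorem exists_strictMono_measure_Ioc_eq (ν : Measure ℝ) [IsFiniteMeasure ν]
    [NullSingletonClass ν] {c : ℕ → ℝ≥0∞} (hc : ∀ j, 0 < c j)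
    (hsum : ∑' j, c j < ν univ) :
    ∃ r : ℕ → ℝ, StrictMono r ∧ ∀ j, ν (Ioc (r j) (r (j + 1))) = c j := by
  obtain ⟨δ, hδ, hδsum⟩ := ENNReal.lt_iff_exists_add_pos_lt.1 hsum
  -- the offset `δ > 0` keeps every target value `t j` strictly positive
  set t : ℕ → ℝ≥0∞ := fun j => ∑ i ∈ Finset.range j, c i + δ
  have ht_lt : ∀ j, t j < ν univ := fun j =>
    lt_of_le_of_lt (add_le_add_left (ENNReal.sum_le_tsum _) _) hδsum
  have ht_ne_top : ∀ j, t j ≠ ⊤ := fun j => (ht_lt j).trans_le le_top |>.ne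
  have ht_succ : ∀ j, t (j + 1) = t j + c j := fun j => by
    simp only [t, Finset.sum_range_succ, add_right_comm]
  choose r hr using fun j => (exists_measure_Iic_eq ν
    (lt_of_lt_of_le (by exact_mod_cast hδ) le_add_self) (ht_lt j) : ∃ r, ν (Iic r) = t j)
  have hr_mono : StrictMono r := strictMono_nat_of_lt_succ fun j => by
    by_contra! h
    have := measure_mono (μ := ν) (Iic_subset_Iic.2 h)
    rw [hr, hr, ht_succ] at this
    exact (ENNReal.lt_add_right (ht_ne_top j) (hc j).ne').not_ge this
  refine ⟨r, hr_mono, fun j => ?_⟩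
  have hsplit := measure_union (μ := ν) (Iic_disjoint_Ioc (le_refl (r j)))
    (measurableSet_Ioc (b := r (j + 1)))
  rw [Iic_union_Ioc_eq_Iic (hr_mono (Nat.lt_succ_self j)).le, hr, hr, ht_succ] at hsplit
  exact ((ENNReal.add_right_inj (ht_ne_top j)).1 hsplit).symm

section StepFunction

variable {α E : Type*} [NormedAddCommGroup E] {D : ℕ → Set α} (v : ℕ → E)

noncomputable def stepFun (D : ℕ → Set α) (v : ℕ → E) (x : α) : E :=
  ∑' j, (D j).indicator (fun _ => v j) x

theorem stepFun_eq_of_mem (hD : Pairwise (Disjoint on D)) {x : α} {j : ℕ} (hx : x ∈ D j) :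
    stepFun D v x = v j := by
  rw [stepFun, tsum_eq_single j fun i hi =>
    indicator_of_notMem (Set.disjoint_left.1 (hD hi.symm) hx) _, indicator_of_mem hx]

theorem stepFun_eq_zero {x : α} (hx : x ∉ ⋃ j, D j) : stepFun D v x = 0 := by
  simp only [mem_iUnion, not_exists] at hx
  simp [stepFun, hx]

theorem stronglyMeasurable_stepFun [MeasurableSpace α] (hD : Pairwise (Disjoint on D))
    (hDm : ∀ j, MeasurableSet (D j)) : StronglyMeasurable (stepFun D v) := by
  refine stronglyMeasurable_of_tendsto (atTop : Filter ℕ)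
    (f := fun N x => ∑ j ∈ Finset.range N, (D j).indicator (fun _ => v j) x)
    (fun N => ?_) (tendsto_pi_nhds.2 fun x => ?_)
  · simpa only [← Finset.sum_apply] using Finset.stronglyMeasurable_sum _
      fun j _ => stronglyMeasurable_const.indicator (hDm j)
  · by_cases hx : x ∈ ⋃ j, D j
    · obtain ⟨j, hj⟩ := mem_iUnion.1 hx
      have h := hasSum_single (f := fun i => (D i).indicator (fun _ => v i) x) j fun i hi =>
        indicator_of_notMem (Set.disjoint_left.1 (hD hi.symm) hj) _
      simpa [stepFun_eq_of_mem v hD hj, hj] using h.tendsto_sum_nat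
    · simp only [mem_iUnion, not_exists] at hx
      simp [stepFun, hx]

theorem lintegral_comp_stepFun [MeasurableSpace α] (μ : Measure α)
    (hD : Pairwise (Disjoint on D)) (hDm : ∀ j, MeasurableSet (D j)) (g : E → ℝ≥0∞) :
    ∫⁻ x, g (stepFun D v x) ∂μ = ∑' j, g (v j) * μ (D j) + g 0 * μ (⋃ j, D j)ᶜ := by
  have hpt : ∀ x, g (stepFun D v x) = ∑' j, (D j).indicator (fun _ => g (v j)) x +
      (⋃ j, D j)ᶜ.indicator (fun _ => g 0) x := by
    intro x
    by_cases hx : x ∈ ⋃ j, D j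
    · obtain ⟨j, hj⟩ := mem_iUnion.1 hx
      rw [stepFun_eq_of_mem v hD hj, tsum_eq_single j fun i hi =>
        indicator_of_notMem (Set.disjoint_left.1 (hD hi.symm) hj) _, indicator_of_mem hj,
        indicator_of_notMem (not_not_intro hx), add_zero]
    · simp only [mem_iUnion, not_exists] at hx
      simp [stepFun_eq_zero v (by simpa using hx), hx]
  rw [lintegral_congr hpt,
    lintegral_add_left (Measurable.tsum fun j => measurable_const.indicator (hDm j)),
    lintegral_tsum fun j => (measurable_const.indicator (hDm j)).aemeasurable,
    lintegral_indicator_const (MeasurableSet.iUnion hDm).compl]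
  simp only [lintegral_indicator_const (hDm _)]

theorem tsum_tsum_le_lintegral_lintegral_stepFun [MeasurableSpace α] (μ : Measure α)
    (hD : Pairwise (Disjoint on D)) (hDm : ∀ j, MeasurableSet (D j))
    (F : E → E → ℝ≥0∞) :
    ∑' i, ∑' j, F (v i) (v j) * μ (D j) * μ (D i) ≤
      ∫⁻ x, ∫⁻ y, F (stepFun D v x) (stepFun D v y) ∂μ ∂μ := by
  rw [lintegral_comp_stepFun v μ hD hDm fun e => ∫⁻ y, F e (stepFun D v y) ∂μ]
  refine le_trans (ENNReal.tsum_le_tsum fun i => ?_) le_self_add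
  rw [ENNReal.tsum_mul_right, lintegral_comp_stepFun v μ hD hDm]
  exact mul_le_mul_left le_self_add _

theorem lintegral_lintegral_stepFun_eq_top [MeasurableSpace α] (μ : Measure α)
    (hD : Pairwise (Disjoint on D)) (hDm : ∀ j, MeasurableSet (D j)) (F : E → E → ℝ≥0∞)
    (i j : ℕ → ℕ) (hi : Injective i)
    (hF : ∀ k, 1 ≤ F (v (i k)) (v (j k)) * μ (D (j k)) * μ (D (i k))) :
    ∫⁻ x, ∫⁻ y, F (stepFun D v x) (stepFun D v y) ∂μ ∂μ = ⊤ := by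
  refine eq_top_iff.2 (le_trans ?_ (tsum_tsum_le_lintegral_lintegral_stepFun v μ hD hDm F))
  calc ⊤ = ∑' _ : ℕ, (1 : ℝ≥0∞) :=
        (ENNReal.tsum_const_eq_top_of_ne_zero one_ne_zero).symm
    _ ≤ ∑' k, ∑' l, F (v (i k)) (v l) * μ (D l) * μ (D (i k)) :=
        ENNReal.tsum_le_tsum fun k => (hF k).trans (ENNReal.le_tsum (j k))
    _ ≤ ∑' k, ∑' l, F (v k) (v l) * μ (D l) * μ (D k) :=
        ENNReal.tsum_comp_le_tsum_of_injective hi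
          fun k => ∑' l, F (v k) (v l) * μ (D l) * μ (D k)

theorem memLp_stepFun [MeasurableSpace α] (μ : Measure α) {p : ℝ} (hp : 0 < p)
    (hD : Pairwise (Disjoint on D)) (hDm : ∀ j, MeasurableSet (D j))
    (hv : ∑' j, ‖v j‖ₑ ^ p * μ (D j) < ⊤) :
    MemLp (stepFun D v) (ENNReal.ofReal p) μ := by
  refine ⟨(stronglyMeasurable_stepFun v hD hDm).aestronglyMeasurable, ?_⟩
  rw [eLpNorm_lt_top_iff_lintegral_rpow_enorm_lt_top (by simpa using hp) ofReal_ne_top,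
    toReal_ofReal hp.le, lintegral_comp_stepFun v μ hD hDm fun e => ‖e‖ₑ ^ p]
  simpa [hp] using hv

end StepFunction

variable {α : Type*} [MeasurableSpace α]

def RealizesMasses (μ : Measure α) : Prop :=
  ∀ c : ℕ → ℝ≥0∞, (∀ j, 0 < c j) → ∑' j, c j < μ univ →
    ∃ D : ℕ → Set α, (∀ j, MeasurableSet (D j)) ∧ Pairwise (Disjoint on D) ∧
      ∀ j, μ (D j) = c j

theorem realizesMasses_of_measurable {μ : Measure α} [IsFiniteMeasure μ] {φ : α → ℝ}
    (hφ : Measurable φ) [NullSingletonClass (μ.map φ)] : RealizesMasses μ := by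
  intro c hc hsum
  rw [← preimage_univ (f := φ), ← Measure.map_apply hφ MeasurableSet.univ] at hsum
  obtain ⟨r, hr_mono, hr⟩ := exists_strictMono_measure_Ioc_eq (μ.map φ) hc hsum
  refine ⟨fun j => φ ⁻¹' Ioc (r j) (r (j + 1)), fun j => hφ measurableSet_Ioc,
    fun i j hij => (hr_mono.monotone.pairwise_disjoint_on_Ioc_succ hij).preimage φ, fun j => ?_⟩
  rw [← hr, Measure.map_apply hφ measurableSet_Ioc]

theorem realizesMasses_volume_restrict {m : ℕ} (hm : 0 < m) (X : Set (Fin m → ℝ))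
    [IsFiniteMeasure (volume.restrict X)] : RealizesMasses (volume.restrict X) := by
  let i₀ : Fin m := ⟨0, hm⟩
  have : NullSingletonClass ((volume.restrict X).map fun x : Fin m → ℝ => x i₀) := by
    refine ⟨fun r => ?_⟩
    rw [Measure.map_apply (measurable_pi_apply i₀) (measurableSet_singleton r)]
    refine nonpos_iff_eq_zero.1 ((Measure.restrict_apply_le _ _).trans_eq ?_)
    rw [volume_pi]
    exact Measure.pi_hyperplane (fun _ : Fin m => (volume : Measure ℝ)) i₀ r
  exact realizesMasses_of_measurable (measurable_pi_apply i₀)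

theorem lintegral_lintegral_lt_top_of_le_mul {E : Type*} [NormedAddCommGroup E] {μ : Measure α}
    [IsFiniteMeasure μ] {p : ℝ} (hp : 0 < p) {u : α → E} (hu : MemLp u (ENNReal.ofReal p) μ)
    {f : E → E → ℝ} {C : ℝ} (hC : 0 ≤ C)
    (hf : ∀ w z, f w z ≤ C * (1 + ‖w‖ ^ p) * (1 + ‖z‖ ^ p)) :
    ∫⁻ x, ∫⁻ y, ENNReal.ofReal (f (u x) (u y)) ∂μ ∂μ < ⊤ := by
  set g : α → ℝ≥0∞ := fun x => ENNReal.ofReal (1 + ‖u x‖ ^ p)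
  have hg : ∫⁻ x, g x ∂μ < ⊤ := by
    refine ((integrable_const 1).add ?_).lintegral_lt_top
    simpa [toReal_ofReal hp.le] using hu.integrable_norm_rpow (by simpa using hp) ofReal_ne_top
  calc ∫⁻ x, ∫⁻ y, ENNReal.ofReal (f (u x) (u y)) ∂μ ∂μ
      ≤ ∫⁻ x, ∫⁻ y, ENNReal.ofReal C * g x * g y ∂μ ∂μ := by
        gcongr with x y
        rw [← ofReal_mul hC, ← ofReal_mul (by positivity)]
        exact ofReal_le_ofReal (hf _ _)
    _ = ∫⁻ x, ENNReal.ofReal C * g x * ∫⁻ y, g y ∂μ ∂μ :=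
        lintegral_congr fun x => lintegral_const_mul' _ _ (mul_ne_top ofReal_ne_top ofReal_ne_top)
    _ = ENNReal.ofReal C * (∫⁻ x, g x ∂μ) * ∫⁻ x, g x ∂μ := by
        rw [lintegral_mul_const' _ _ hg.ne, lintegral_const_mul' _ _ ofReal_ne_top]
    _ < ⊤ := mul_lt_top (mul_lt_top ofReal_lt_top hg) hg

theorem exists_le_mul_one_add_rpow_of_forall_memLp {E : Type*} [NormedAddCommGroup E]
    {μ : Measure α} (hμ : RealizesMasses μ) (hμ₀ : 0 < μ univ) {p : ℝ} (hp : 0 < p)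
    {f : E → E → ℝ} (hf : ∀ u : α → E, MemLp u (ENNReal.ofReal p) μ →
      ∫⁻ x, ∫⁻ y, ENNReal.ofReal (f (u x) (u y)) ∂μ ∂μ < ⊤) :
    ∃ C : ℝ, 0 < C ∧ ∀ w z, f w z ≤ C * (1 + ‖w‖ ^ p) * (1 + ‖z‖ ^ p) := by
  by_contra! hbig
  obtain ⟨ε, -, hε₀, hε⟩ := ENNReal.lt_iff_exists_real_btwn.1 hμ₀
  have hε_pos : 0 < ε := ofReal_pos.1 hε₀
  set a : ℕ → ℝ := fun j => ε / 2 / 2 ^ j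
  have ha : ∀ j, 0 < a j := fun j => by positivity
  have ha_sum : ∑' j, ENNReal.ofReal (a j) = ENNReal.ofReal ε := by
    rw [← ofReal_tsum_of_nonneg (fun j => (ha j).le) (summable_geometric_two' ε),
      tsum_geometric_two']
  choose w z hwz using fun k => hbig (a (2 * k) * a (2 * k + 1))⁻¹ (by positivity)
  set v : ℕ → E := fun j => if Even j then w (j / 2) else z (j / 2)
  have hv_even : ∀ k, v (2 * k) = w k := fun k => by simp [v]
  have hv_odd : ∀ k, v (2 * k + 1) = z k := fun k => by
    simp [v, show (2 * k + 1) / 2 = k by omega]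
  set c : ℕ → ℝ≥0∞ := fun j => ENNReal.ofReal (a j / (1 + ‖v j‖ ^ p))
  have hc_pos : ∀ j, 0 < c j := fun j => ofReal_pos.2 (by positivity)
  have hc_le : ∀ j, c j ≤ ENNReal.ofReal (a j) := fun j =>
    ofReal_le_ofReal (div_le_self (ha j).le (le_add_of_nonneg_right (by positivity)))
  have hc_mul_le : ∀ j, ‖v j‖ₑ ^ p * c j ≤ ENNReal.ofReal (a j) := fun j => by
    rw [← ofReal_norm, ofReal_rpow_of_nonneg (norm_nonneg _) hp.le,
      ← ofReal_mul (by positivity)]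
    refine ofReal_le_ofReal ?_
    calc ‖v j‖ ^ p * (a j / (1 + ‖v j‖ ^ p))
        = a j * (‖v j‖ ^ p / (1 + ‖v j‖ ^ p)) := by ring
      _ ≤ a j := mul_le_of_le_one_right (ha j).le ((div_le_one (by positivity)).2 (by linarith))
  obtain ⟨D, hDm, hD, hμD⟩ := hμ c hc_pos
    (lt_of_le_of_lt (ENNReal.tsum_le_tsum hc_le) (ha_sum ▸ hε))
  have hu : MemLp (stepFun D v) (ENNReal.ofReal p) μ := by
    refine memLp_stepFun v μ hp hD hDm ?_
    simp_rw [hμD]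
    exact lt_of_le_of_lt (ENNReal.tsum_le_tsum hc_mul_le) (ha_sum ▸ ofReal_lt_top)
  have hpair : ∀ k,
      1 ≤ ENNReal.ofReal (f (v (2 * k)) (v (2 * k + 1))) * c (2 * k + 1) * c (2 * k) := by
    intro k
    have hf_pos : 0 < f (w k) (z k) := lt_of_le_of_lt (by positivity) (hwz k)
    simp only [c, hv_even, hv_odd]
    rw [← ofReal_mul hf_pos.le, ← ofReal_mul (by positivity), ← ofReal_one]
    refine ofReal_le_ofReal ?_
    have ha₀ := ha (2 * k)
    have ha₁ := ha (2 * k + 1)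
    calc (1 : ℝ) = (a (2 * k) * a (2 * k + 1))⁻¹ * (1 + ‖w k‖ ^ p) * (1 + ‖z k‖ ^ p) *
          (a (2 * k + 1) / (1 + ‖z k‖ ^ p)) * (a (2 * k) / (1 + ‖w k‖ ^ p)) := by field_simp
      _ ≤ _ := by gcongr; exact (hwz k).le
  exact (hf _ hu).ne (lintegral_lintegral_stepFun_eq_top v μ hD hDm
    (fun e e' => ENNReal.ofReal (f e e')) (fun k => 2 * k) (fun k => 2 * k + 1)
    (fun k l h => by simpa using h) fun k => by simpa only [hμD] using hpair k)

theorem stmt_5_general (m n : ℕ) (hm : 0 < m)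
    (X : Set (Fin m → ℝ)) (hXbdd : Bornology.IsBounded X)
    (hXpos : 0 < volume X)
    (p : ℝ) (hp : 1 ≤ p)
    (f : EuclideanSpace ℝ (Fin n) → EuclideanSpace ℝ (Fin n) → ℝ) :
    (∀ u : (Fin m → ℝ) → EuclideanSpace ℝ (Fin n),
      MemLp u (ENNReal.ofReal p) (volume.restrict X) →
      ∫⁻ x, ∫⁻ y, ENNReal.ofReal (f (u x) (u y))
        ∂(volume.restrict X) ∂(volume.restrict X) < ⊤) ↔
    (∃ C : ℝ, 0 < C ∧ ∀ w z : EuclideanSpace ℝ (Fin n),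
      f w z ≤ C * (1 + ‖w‖ ^ p) * (1 + ‖z‖ ^ p)) := by
  have hp₀ : 0 < p := by linarith
  have : IsFiniteMeasure (volume.restrict X) :=
    isFiniteMeasure_restrict.2 hXbdd.measure_lt_top.ne
  refine ⟨exists_le_mul_one_add_rpow_of_forall_memLp (realizesMasses_volume_restrict hm X)
    (by rwa [Measure.restrict_apply_univ]) hp₀, fun ⟨C, hC, hf⟩ u hu => ?_⟩
  exact lintegral_lintegral_lt_top_of_le_mul hp₀ hu hC.le hf

theorem stmt_5 (m n : ℕ) (hm : 0 < m) (hn : 0 < n)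
    (X : Set (Fin m → ℝ)) (hXmeas : MeasurableSet X) (hXbdd : Bornology.IsBounded X)
    (hXpos : 0 < volume X)
    (p : ℝ) (hp : 1 ≤ p)
    (f : EuclideanSpace ℝ (Fin n) → EuclideanSpace ℝ (Fin n) → ℝ)
    (hfmeas : Measurable (fun q : (EuclideanSpace ℝ (Fin n)) × (EuclideanSpace ℝ (Fin n)) =>
      f q.1 q.2))
    (hfnonneg : ∀ w z, 0 ≤ f w z) :
    (∀ u : (Fin m → ℝ) → EuclideanSpace ℝ (Fin n),
      MemLp u (ENNReal.ofReal p) (volume.restrict X) →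
      ∫⁻ x, ∫⁻ y, ENNReal.ofReal (f (u x) (u y))
        ∂(volume.restrict X) ∂(volume.restrict X) < ⊤) ↔
    (∃ C : ℝ, 0 < C ∧ ∀ w z : EuclideanSpace ℝ (Fin n),
      f w z ≤ C * (1 + ‖w‖ ^ p) * (1 + ‖z‖ ^ p)) :=
  stmt_5_general m n hm X hXbdd hXpos p hp f
end

section
/- Let X have positive Lebesgue measure and let f : ℝⁿ × ℝⁿ → [0,∞) be Borel measurable. Then ∫_X ∫_X f(u(x),u(y)) dx dy < ∞ holds for every u ∈ L^∞(X;ℝⁿ) if and only if for every M > 0 there exists a constant C_M > 0 such that f(w,z) ≤ C_M for all w, z ∈ ℝⁿ with |w| ≤ M and |z| ≤ M, i.e. if and only if f is bounded on bounded sets. -/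
/-!
If `f` is bounded on bounded sets, then for `u ∈ L^∞` the integrand `f (u x) (u y)` is essentially
bounded by some `C`, so the double integral is at most `C |X|²`.

Conversely, suppose `f` is unbounded on `B_M × B_M`. Since singletons are null, the measures of
the closed balls around a point `p` of the support of `volume|X` tend to `0` while staying
positive; along a subsequence of radii on which they strictly decrease, the annuli form a
countable family `A (k, b)` of disjoint sets of positive measure. Choosing `w k, z k ∈ B_M` with
`f (w k) (z k) ≥ (|A (k, true)| |A (k, false)|)⁻¹` and letting `u` equal `w k` on `A (k, false)`
and `z k` on `A (k, true)`, the double integral is at least `∑ k, 1 = ∞`.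
-/

open MeasureTheory ENNReal Filter Topology Metric Set Function

lemma exists_strictMono_strictAnti_comp {β : Type*} [LinearOrder β] [TopologicalSpace β]
    [OrderTopology β] {a : ℕ → β} {b : β} (hb : ∀ n, b < a n) (ha : Tendsto a atTop (𝓝 b)) :
    ∃ φ : ℕ → ℕ, StrictMono φ ∧ StrictAnti (a ∘ φ) := by
  have : ∀ n, ∃ k, n < k ∧ a k < a n := fun n =>
    ((eventually_gt_atTop n).and (ha.eventually (gt_mem_nhds (hb n)))).exists
  choose next hnext using this
  refine ⟨fun k => next^[k] 0, strictMono_nat_of_lt_succ fun k => ?_,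
    strictAnti_nat_of_succ_lt fun k => ?_⟩
  · simpa only [iterate_succ_apply'] using (hnext _).1
  · simpa only [comp_apply, iterate_succ_apply'] using (hnext _).2

section

variable {α : Type*} [MeasurableSpace α] {μ : Measure α}

lemma exists_measurable_index {ι : Type*} [Countable ι] [Nonempty ι] [MeasurableSpace ι]
    {A : ι → Set α} (hA : ∀ i, MeasurableSet (A i)) (hd : Pairwise (Disjoint on A)) :
    ∃ idx : α → ι, Measurable idx ∧ ∀ i, ∀ x ∈ A i, idx x = i :=
  exists_measurable_piecewise A hA (fun i _ => i) (fun _ => measurable_const)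
    fun _ _ hij _ hx => absurd hx.2 (disjoint_left.1 (hd hij) hx.1)

lemma tsum_mul_measure_le_lintegral_lintegral {β : Type*} (g : β → β → ℝ≥0∞) {u : α → β}
    {B C : ℕ → Set α} (hB : ∀ k, MeasurableSet (B k)) (hBd : Pairwise (Disjoint on B))
    (hC : ∀ k, MeasurableSet (C k)) {w z : ℕ → β} (hw : ∀ k, ∀ x ∈ B k, u x = w k)
    (hz : ∀ k, ∀ y ∈ C k, u y = z k) :
    ∑' k, g (w k) (z k) * μ (C k) * μ (B k) ≤ ∫⁻ x, ∫⁻ y, g (u x) (u y) ∂μ ∂μ :=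
  calc ∑' k, g (w k) (z k) * μ (C k) * μ (B k)
      = ∑' k, ∫⁻ _ in B k, ∫⁻ _ in C k, g (w k) (z k) ∂μ ∂μ := by
        simp only [setLIntegral_const]
    _ ≤ ∑' k, ∫⁻ x in B k, ∫⁻ y, g (u x) (u y) ∂μ ∂μ := by
        refine ENNReal.tsum_le_tsum fun k =>
          lintegral_mono_ae (ae_restrict_of_forall_mem (hB k) fun x hx => ?_)
        refine le_trans (lintegral_mono_ae (ae_restrict_of_forall_mem (hC k) fun y hy => ?_))
          (setLIntegral_le_lintegral (C k) _)
        rw [hw k x hx, hz k y hy]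
    _ = ∫⁻ x in ⋃ k, B k, ∫⁻ y, g (u x) (u y) ∂μ ∂μ := (lintegral_iUnion hB hBd _).symm
    _ ≤ ∫⁻ x, ∫⁻ y, g (u x) (u y) ∂μ ∂μ := setLIntegral_le_lintegral _ _

lemma lintegral_lintegral_lt_top_of_ae_le [IsFiniteMeasure μ] {g : α → α → ℝ≥0∞} {c : ℝ≥0∞}
    (hc : c ≠ ∞) (h : ∀ᵐ x ∂μ, ∀ᵐ y ∂μ, g x y ≤ c) : ∫⁻ x, ∫⁻ y, g x y ∂μ ∂μ < ∞ :=
  calc ∫⁻ x, ∫⁻ y, g x y ∂μ ∂μ ≤ ∫⁻ _, ∫⁻ _, c ∂μ ∂μ :=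
        lintegral_mono_ae (h.mono fun _ hx => lintegral_mono_ae hx)
    _ = c * μ univ * μ univ := by simp only [lintegral_const]
    _ < ∞ := by finiteness

lemma MeasureTheory.MemLp.exists_pos_ae_norm_le {E : Type*} [NormedAddCommGroup E] {u : α → E}
    (hu : MemLp u ⊤ μ) : ∃ R > 0, ∀ᵐ x ∂μ, ‖u x‖ ≤ R := by
  refine ⟨(eLpNormEssSup u μ).toReal + 1, by positivity, ?_⟩
  filter_upwards [ae_le_eLpNormEssSup (f := u)] with x hx
  have hfin : eLpNormEssSup u μ ≠ ∞ := by simpa [eLpNorm_exponent_top] using hu.2.ne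
  linarith [toReal_mono hfin hx, toReal_enorm (u x)]

variable [MetricSpace α] [SecondCountableTopology α] [OpensMeasurableSpace α]
  [IsFiniteMeasure μ] [NeZero μ] [NullSingletonClass μ]

lemma exists_measure_closedBall_pos_tendsto_zero :
    ∃ p : α, (∀ n : ℕ, 0 < μ (closedBall p (1 / (n + 1)))) ∧
      Tendsto (fun n : ℕ => μ (closedBall p (1 / (n + 1)))) atTop (𝓝 0) := by
  obtain ⟨p, -, hp⟩ := exists_mem_forall_mem_nhdsWithin_pos_measure
    (Measure.measure_univ_ne_zero.2 (NeZero.ne μ))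
  refine ⟨p, fun n => hp _ (mem_nhdsWithin_of_mem_nhds
    (closedBall_mem_nhds p Nat.one_div_pos_of_nat)), ?_⟩
  have hanti : Antitone fun n : ℕ => closedBall p (1 / (n + 1 : ℝ)) := fun i j hij =>
    closedBall_subset_closedBall (Nat.one_div_le_one_div hij)
  have hinter : ⋂ n : ℕ, closedBall p (1 / (n + 1 : ℝ)) ⊆ {p} := by
    intro x hx
    rw [mem_iInter] at hx
    exact dist_le_zero.1 (ge_of_tendsto' tendsto_one_div_add_atTop_nhds_zero_nat fun n => hx n)
  have hlim := tendsto_measure_iInter_atTop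
    (fun n => measurableSet_closedBall.nullMeasurableSet) hanti ⟨0, measure_ne_top μ _⟩
  rwa [measure_mono_null hinter (measure_singleton p)] at hlim

theorem exists_pairwise_disjoint_measure_pos (ι : Type*) [Countable ι] :
    ∃ A : ι → Set α, (∀ i, MeasurableSet (A i)) ∧ Pairwise (Disjoint on A) ∧
      ∀ i, 0 < μ (A i) := by
  obtain ⟨p, hpos, hlim⟩ := exists_measure_closedBall_pos_tendsto_zero (μ := μ)
  obtain ⟨φ, hφ, hμφ⟩ := exists_strictMono_strictAnti_comp hpos hlim
  set ρ : ℕ → ℝ := fun k => 1 / (φ k + 1)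
  have hρ : Antitone ρ := fun i j hij => Nat.one_div_le_one_div (hφ.monotone hij)
  have hannulus : ∀ k, (dist · p) ⁻¹' Ioc (ρ (k + 1)) (ρ k) =
      closedBall p (ρ k) \ closedBall p (ρ (k + 1)) := fun k => by
    ext x; simp [and_comm]
  obtain ⟨e, he⟩ := Countable.exists_injective_nat ι
  refine ⟨fun i => closedBall p (ρ (e i)) \ closedBall p (ρ (e i + 1)),
    fun i => measurableSet_closedBall.diff measurableSet_closedBall, ?_,
    fun i => (tsub_pos_of_lt (hμφ (Nat.lt_succ_self (e i)))).trans_le le_measure_sdiff⟩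
  simp_rw [← hannulus]
  exact (hρ.pairwise_disjoint_on_Ioc_succ.comp_of_injective he).mono fun _ _ h => h.preimage _

theorem exists_measurable_lintegral_lintegral_eq_top {β : Type*} [MeasurableSpace β]
    (g : β → β → ℝ≥0∞) {K : Set β} (hg : ∀ c ≠ ∞, ∃ w ∈ K, ∃ z ∈ K, c ≤ g w z) :
    ∃ u : α → β, Measurable u ∧ (∀ x, u x ∈ K) ∧ ∫⁻ x, ∫⁻ y, g (u x) (u y) ∂μ ∂μ = ∞ := by
  obtain ⟨A, hAm, hAd, hApos⟩ := exists_pairwise_disjoint_measure_pos (μ := μ) (ℕ × Bool)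
  have hA0 : ∀ k, μ (A (k, true)) * μ (A (k, false)) ≠ 0 := fun k =>
    mul_ne_zero (hApos _).ne' (hApos _).ne'
  have hA_top : ∀ k, μ (A (k, true)) * μ (A (k, false)) ≠ ∞ := fun k => by finiteness
  have : ∀ k, ∃ w ∈ K, ∃ z ∈ K, (μ (A (k, true)) * μ (A (k, false)))⁻¹ ≤ g w z := fun k =>
    hg _ (ENNReal.inv_ne_top.2 (hA0 k))
  choose w hwK z hzK hwz using this
  obtain ⟨idx, hidx, hidxA⟩ := exists_measurable_index hAm hAd
  set v : ℕ × Bool → β := fun q => if q.2 then z q.1 else w q.1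
  refine ⟨v ∘ idx, (measurable_of_countable v).comp hidx, fun x => ?_, top_le_iff.1 ?_⟩
  · by_cases h : (idx x).2 <;> simp [v, h, hwK, hzK]
  calc ∞ = ∑' _ : ℕ, (1 : ℝ≥0∞) := (ENNReal.tsum_const_eq_top_of_ne_zero one_ne_zero).symm
    _ ≤ ∑' k, g (w k) (z k) * μ (A (k, true)) * μ (A (k, false)) := by
        refine ENNReal.tsum_le_tsum fun k => ?_
        rw [← ENNReal.inv_mul_cancel (hA0 k) (hA_top k), mul_assoc]
        gcongr
        exact hwz k
    _ ≤ ∫⁻ x, ∫⁻ y, g ((v ∘ idx) x) ((v ∘ idx) y) ∂μ ∂μ :=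
        tsum_mul_measure_le_lintegral_lintegral g (fun k => hAm _)
          (hAd.comp_of_injective fun _ _ h => (Prod.ext_iff.1 h).1) (fun k => hAm _)
          (fun k x hx => by simp [v, hidxA _ x hx]) (fun k x hx => by simp [v, hidxA _ x hx])

end

theorem stmt_6_general (m n : ℕ) (hm : 0 < m)
    (X : Set (Fin m → ℝ)) (hXbdd : Bornology.IsBounded X)
    (hXpos : 0 < volume X)
    (f : EuclideanSpace ℝ (Fin n) → EuclideanSpace ℝ (Fin n) → ℝ) :
    (∀ u : (Fin m → ℝ) → EuclideanSpace ℝ (Fin n),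
      MemLp u ⊤ (volume.restrict X) →
      ∫⁻ x, ∫⁻ y, ENNReal.ofReal (f (u x) (u y))
        ∂(volume.restrict X) ∂(volume.restrict X) < ⊤) ↔
    (∀ M : ℝ, 0 < M → ∃ C : ℝ, 0 < C ∧ ∀ w z : EuclideanSpace ℝ (Fin n),
      ‖w‖ ≤ M → ‖z‖ ≤ M → f w z ≤ C) := by
  have : Nonempty (Fin m) := ⟨⟨0, hm⟩⟩
  have : IsFiniteMeasure (volume.restrict X) :=
    isFiniteMeasure_restrict.2 hXbdd.measure_lt_top.ne
  constructor
  · intro hfin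
    have : NeZero (volume.restrict X) := ⟨by simpa using hXpos.ne'⟩
    by_contra! hunb
    obtain ⟨M, -, hunb⟩ := hunb
    obtain ⟨u, hu, huM, hu_top⟩ := exists_measurable_lintegral_lintegral_eq_top
      (μ := volume.restrict X) (fun w z => ENNReal.ofReal (f w z)) (K := closedBall 0 M)
      fun c hc => by
        obtain ⟨w, z, hw, hz, hwz⟩ := hunb (c.toReal + 1) (by positivity)
        refine ⟨w, by simpa using hw, z, by simpa using hz, ?_⟩
        rw [← ofReal_toReal hc]
        exact ofReal_le_ofReal (by linarith)
    have hu_Lp : MemLp u ⊤ (volume.restrict X) :=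
      memLp_top_of_bound hu.aestronglyMeasurable M (ae_of_all _ fun x => by simpa using huM x)
    exact (hfin u hu_Lp).ne hu_top
  · intro hbdd u hu
    obtain ⟨R, hR, huR⟩ := hu.exists_pos_ae_norm_le
    obtain ⟨C, -, hC⟩ := hbdd R hR
    refine lintegral_lintegral_lt_top_of_ae_le (ofReal_ne_top (r := C)) ?_
    filter_upwards [huR] with x hx
    filter_upwards [huR] with y hy
    exact ofReal_le_ofReal (hC _ _ hx hy)

theorem stmt_6 (m n : ℕ) (hm : 0 < m) (hn : 0 < n)
    (X : Set (Fin m → ℝ)) (hXmeas : MeasurableSet X) (hXbdd : Bornology.IsBounded X)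
    (hXpos : 0 < volume X)
    (f : EuclideanSpace ℝ (Fin n) → EuclideanSpace ℝ (Fin n) → ℝ)
    (hfmeas : Measurable (fun q : (EuclideanSpace ℝ (Fin n)) × (EuclideanSpace ℝ (Fin n)) =>
      f q.1 q.2))
    (hfnonneg : ∀ w z, 0 ≤ f w z) :
    (∀ u : (Fin m → ℝ) → EuclideanSpace ℝ (Fin n),
      MemLp u ⊤ (volume.restrict X) →
      ∫⁻ x, ∫⁻ y, ENNReal.ofReal (f (u x) (u y))
        ∂(volume.restrict X) ∂(volume.restrict X) < ⊤) ↔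
    (∀ M : ℝ, 0 < M → ∃ C : ℝ, 0 < C ∧ ∀ w z : EuclideanSpace ℝ (Fin n),
      ‖w‖ ≤ M → ‖z‖ ≤ M → f w z ≤ C) :=
  stmt_6_general m n hm X hXbdd hXpos f
end

section
/- Let p ∈ [1,∞) and let f : X × X × ℝⁿ × ℝⁿ → ℝ be a pairwise symmetric, measurable function whose negative part f⁻ is p-bounded, i.e. there exist a constant C > 0 and nonnegative functions α ∈ L^1(X×X), β ∈ L^1(X) with f(x,y,w,z) ≥ −(α(x,y) + β(x)|z|^p + β(y)|w|^p + C|w|^p|z|^p) for almost all (x,y) ∈ X×X and all w, z ∈ ℝⁿ. Assume that for almost all (x,y) ∈ X×X the map (w,z) ↦ f(x,y,w,z) is lower semi-continuous on ℝⁿ × ℝⁿ. Then the non-local functional J^p_f is sequentially lower semi-continuous with respect to the norm topology on L^p(X;ℝⁿ): for every sequence (u_k) converging to u in L^p(X;ℝⁿ) norm, liminf_{k→∞} J^p_f(u_k) ≥ J^p_f(u). -/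
/-!
For the majorant `G_u(x,y) = α(x,y) + β(x)|u(y)|^p + β(y)|u(x)|^p + C|u(x)|^p|u(y)|^p` of
`f⁻(x,y,u(x),u(y))` one has `J(u) = ∫∫ (f + G_u) - ∫∫ G_u` with a nonnegative first integrand.
By Tonelli, `∫∫ G_u = ∫∫ α + 2 (∫ β) ‖u‖_p^p + C ‖u‖_p^{2p}` is finite and continuous in `u`
for the `L^p` norm. Every subsequence of `u_k → u` has a further subsequence converging almost
everywhere, and along it Fatou's lemma together with the lower semicontinuity of `f` in `(w,z)`
gives `∫∫ (f + G_u) ≤ liminf ∫∫ (f + G_{u_k})`.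
-/

open MeasureTheory ENNReal Filter Topology

/-- The non-local functional `J(u) = ∫∫ f(x,y,u(x),u(y)) dx dy`, with values in
`ℝ ∪ {∞}` (formalised inside `EReal`): it is the difference of the (possibly infinite)
integral of the positive part and the integral of the negative part of the integrand. -/
noncomputable def nonlocalJ {α E : Type*} [MeasurableSpace α] (μ : Measure α)
    (f : α → α → E → E → ℝ) (u : α → E) : EReal :=
  ((∫⁻ x, ∫⁻ y, ENNReal.ofReal (f x y (u x) (u y)) ∂μ ∂μ : ℝ≥0∞) : EReal) -
    ((∫⁻ x, ∫⁻ y, ENNReal.ofReal (-f x y (u x) (u y)) ∂μ ∂μ : ℝ≥0∞) : EReal)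

lemma ENNReal.ofReal_add_add_ofReal_neg {g h : ℝ} (hh : 0 ≤ h) (hgh : 0 ≤ g + h) :
    ENNReal.ofReal (g + h) + ENNReal.ofReal (-g) = ENNReal.ofReal g + ENNReal.ofReal h := by
  rcases le_total 0 g with hg | hg
  · rw [ENNReal.ofReal_add hg hh, ENNReal.ofReal_of_nonpos (neg_nonpos.2 hg), add_zero]
  · rw [ENNReal.ofReal_of_nonpos hg, zero_add, ← ENNReal.ofReal_add hgh (neg_nonneg.2 hg)]
    ring_nf

lemma EReal.coe_ennreal_sub_eq_of_add_eq {a b c d : ℝ≥0∞} (hb : b ≠ ⊤) (hd : d ≠ ⊤)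
    (h : a + d = c + b) : (a : EReal) - b = c - d := by
  lift b to NNReal using hb
  lift d to NNReal using hd
  rcases eq_or_ne a ⊤ with rfl | ha
  · obtain rfl : c = ⊤ := by simpa using h.symm
    simp
  · lift a to NNReal using ha
    have hc : c ≠ ⊤ := by rintro rfl; simp at h
    lift c to NNReal using hc
    have h' : (a : ℝ) + d = c + b := by exact_mod_cast h
    simp only [EReal.coe_nnreal_eq_coe_real, ← EReal.coe_sub, EReal.coe_eq_coe_iff]
    linarith

lemma EReal.coe_ennreal_sub_le_liminf_sub {P G : ℕ → ℝ≥0∞} {P₀ G₀ : ℝ≥0∞}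
    (hP : P₀ ≤ liminf P atTop) (hG : Tendsto G atTop (𝓝 G₀)) :
    (P₀ : EReal) - G₀ ≤ liminf (fun k => (P k : EReal) - G k) atTop := by
  have hP' : (P₀ : EReal) ≤ liminf (fun k => (P k : EReal)) atTop := by
    refine (EReal.coe_ennreal_le_coe_ennreal_iff.2 hP).trans_eq ?_
    exact Monotone.map_liminf_of_continuousAt
      (fun _ _ h => EReal.coe_ennreal_le_coe_ennreal_iff.2 h) P
      continuous_coe_ennreal_ereal.continuousAt
  have hG' : -(G₀ : EReal) = liminf (fun k => -(G k : EReal)) atTop :=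
    ((continuous_neg.tendsto _).comp
      ((continuous_coe_ennreal_ereal.tendsto _).comp hG)).liminf_eq.symm
  rw [sub_eq_add_neg, hG']
  exact (add_le_add_left hP' _).trans EReal.le_liminf_add

lemma le_liminf_of_forall_exists_subseq {β : Type*} [CompleteLinearOrder β] [DenselyOrdered β]
    {x : ℕ → β} {a : β}
    (h : ∀ φ : ℕ → ℕ, StrictMono φ → ∃ ψ : ℕ → ℕ, StrictMono ψ ∧ a ≤ liminf (x ∘ φ ∘ ψ) atTop) :
    a ≤ liminf x atTop := by
  by_contra! hlt
  obtain ⟨b, hxb, hba⟩ := exists_between hlt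
  obtain ⟨φ, hφ, hφb⟩ :=
    extraction_of_frequently_atTop (frequently_lt_of_liminf_lt (by isBoundedDefault) hxb)
  obtain ⟨ψ, -, hψ⟩ := h φ hφ
  have hψb : liminf (x ∘ φ ∘ ψ) atTop ≤ b :=
    liminf_le_of_frequently_le' (Frequently.of_forall fun k => (hφb (ψ k)).le)
  exact (hψ.trans hψb).not_gt hba

lemma lintegral_le_liminf_of_lowerSemicontinuous {γ Z : Type*} [MeasurableSpace γ]
    [TopologicalSpace Z] {ν : Measure γ} {Φ : γ → Z → ℝ≥0∞}
    (hΦ : ∀ᵐ q ∂ν, LowerSemicontinuous (Φ q)) {z : ℕ → γ → Z} {z₀ : γ → Z}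
    (hz : ∀ᵐ q ∂ν, Tendsto (fun k => z k q) atTop (𝓝 (z₀ q)))
    (hm : ∀ k, AEMeasurable (fun q => Φ q (z k q)) ν) :
    ∫⁻ q, Φ q (z₀ q) ∂ν ≤ liminf (fun k => ∫⁻ q, Φ q (z k q) ∂ν) atTop := by
  calc ∫⁻ q, Φ q (z₀ q) ∂ν ≤ ∫⁻ q, liminf (fun k => Φ q (z k q)) atTop ∂ν := by
        refine lintegral_mono_ae ?_
        filter_upwards [hΦ, hz] with q hΦq hzq
        exact (hΦq.le_liminf _).trans hzq.liminf_le_liminf_comp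
    _ ≤ _ := lintegral_liminf_le' hm

lemma lintegral_ofReal_sub_lintegral_ofReal_neg {γ : Type*} [MeasurableSpace γ] {ν : Measure γ}
    {g h : γ → ℝ} (hg : AEMeasurable g ν) (hh : AEMeasurable h ν) (h0 : ∀ q, 0 ≤ h q)
    (hgh : ∀ᵐ q ∂ν, 0 ≤ g q + h q) (hfin : ∫⁻ q, ENNReal.ofReal (h q) ∂ν ≠ ⊤) :
    ((∫⁻ q, ENNReal.ofReal (g q) ∂ν : ℝ≥0∞) : EReal) - ∫⁻ q, ENNReal.ofReal (-g q) ∂ν =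
      ((∫⁻ q, ENNReal.ofReal (g q + h q) ∂ν : ℝ≥0∞) : EReal) - ∫⁻ q, ENNReal.ofReal (h q) ∂ν := by
  have hneg : ∫⁻ q, ENNReal.ofReal (-g q) ∂ν ≠ ⊤ := by
    refine ne_top_of_le_ne_top hfin (lintegral_mono_ae ?_)
    filter_upwards [hgh] with q hq
    exact ENNReal.ofReal_le_ofReal (by linarith)
  refine EReal.coe_ennreal_sub_eq_of_add_eq hneg hfin ?_
  rw [← lintegral_add_right' _ hh.ennreal_ofReal,
    ← lintegral_add_right' _ hg.fun_neg.ennreal_ofReal]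
  refine lintegral_congr_ae ?_
  filter_upwards [hgh] with q hq
  exact (ENNReal.ofReal_add_add_ofReal_neg (h0 q) hq).symm

lemma lintegral_enorm_rpow_eq_eLpNorm_rpow {α E : Type*} [MeasurableSpace α] {μ : Measure α}
    [NormedAddCommGroup E] {p : ℝ} (hp : 0 < p) (w : α → E) :
    ∫⁻ x, ENNReal.ofReal (‖w x‖ ^ p) ∂μ = eLpNorm w (ENNReal.ofReal p) μ ^ p := by
  rw [eLpNorm_eq_eLpNorm' (by simpa using hp) ofReal_ne_top, toReal_ofReal hp.le,
    ← lintegral_rpow_enorm_eq_rpow_eLpNorm' hp]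
  congr 1 with x
  rw [← ofReal_rpow_of_nonneg (norm_nonneg _) hp.le, ofReal_norm]

lemma tendsto_eLpNorm_of_tendsto_eLpNorm_sub {α E : Type*} [MeasurableSpace α] {μ : Measure α}
    [NormedAddCommGroup E] {p : ℝ≥0∞} (hp : 1 ≤ p) {u : ℕ → α → E} {v : α → E}
    (hu : ∀ k, AEStronglyMeasurable (u k) μ) (hv : MemLp v p μ)
    (huv : Tendsto (fun k => eLpNorm (u k - v) p μ) atTop (𝓝 0)) :
    Tendsto (fun k => eLpNorm (u k) p μ) atTop (𝓝 (eLpNorm v p μ)) := by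
  have hlower : Tendsto (fun k => eLpNorm v p μ - eLpNorm (u k - v) p μ) atTop
      (𝓝 (eLpNorm v p μ)) := by
    simpa using ENNReal.Tendsto.sub tendsto_const_nhds huv (Or.inl hv.eLpNorm_ne_top)
  have hupper : Tendsto (fun k => eLpNorm v p μ + eLpNorm (u k - v) p μ) atTop
      (𝓝 (eLpNorm v p μ)) := by
    simpa using tendsto_const_nhds.add huv
  refine tendsto_of_tendsto_of_tendsto_of_le_of_le hlower hupper (fun k => ?_) (fun k => ?_)
  · rw [tsub_le_iff_right, eLpNorm_sub_comm]
    simpa using eLpNorm_add_le (hu k) (hv.1.sub (hu k)) hp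
  · simpa using eLpNorm_add_le hv.1 ((hu k).sub hv.1) hp

section PBound

variable {α E : Type*} [NormedAddCommGroup E] {p C : ℝ} {a : α × α → ℝ} {β : α → ℝ}

noncomputable def pBound (C p : ℝ) (a : α × α → ℝ) (β : α → ℝ) (q : α × α) (w z : E) : ℝ :=
  a q + β q.1 * ‖z‖ ^ p + β q.2 * ‖w‖ ^ p + C * ‖w‖ ^ p * ‖z‖ ^ p

lemma continuous_pBound (hp : 0 ≤ p) (q : α × α) :
    Continuous fun wz : E × E => pBound C p a β q wz.1 wz.2 := by
  unfold pBound
  fun_prop (disch := exact Or.inr hp)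

lemma pBound_nonneg (hC : 0 ≤ C) (ha : ∀ q, 0 ≤ a q) (hβ : ∀ x, 0 ≤ β x) (q : α × α)
    (w z : E) : 0 ≤ pBound C p a β q w z := by
  have hw : 0 ≤ ‖w‖ ^ p := by positivity
  have hz : 0 ≤ ‖z‖ ^ p := by positivity
  exact add_nonneg (add_nonneg (add_nonneg (ha q) (mul_nonneg (hβ q.1) hz))
    (mul_nonneg (hβ q.2) hw)) (mul_nonneg (mul_nonneg hC hw) hz)

lemma ofReal_pBound (hC : 0 ≤ C) (ha : ∀ q, 0 ≤ a q) (hβ : ∀ x, 0 ≤ β x) (q : α × α)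
    (w z : E) :
    ENNReal.ofReal (pBound C p a β q w z) =
      ENNReal.ofReal (a q) + ENNReal.ofReal (β q.1) * ENNReal.ofReal (‖z‖ ^ p) +
        ENNReal.ofReal (‖w‖ ^ p) * ENNReal.ofReal (β q.2) +
        ENNReal.ofReal C * ENNReal.ofReal (‖w‖ ^ p) * ENNReal.ofReal (‖z‖ ^ p) := by
  have hw : 0 ≤ ‖w‖ ^ p := by positivity
  have hz : 0 ≤ ‖z‖ ^ p := by positivity
  have hβ₁ := mul_nonneg (hβ q.1) hz
  have hβ₂ := mul_nonneg (hβ q.2) hw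
  rw [pBound, ofReal_add (add_nonneg (add_nonneg (ha q) hβ₁) hβ₂)
      (mul_nonneg (mul_nonneg hC hw) hz), ofReal_add (add_nonneg (ha q) hβ₁) hβ₂,
    ofReal_add (ha q) hβ₁, ofReal_mul (hβ q.1), ofReal_mul (hβ q.2),
    mul_comm _ (ENNReal.ofReal (‖w‖ ^ p)), ofReal_mul (mul_nonneg hC hw), ofReal_mul hC]

end PBound

lemma aemeasurable_nonlocal_integrand {α E : Type*} [MeasurableSpace α] [MeasurableSpace E]
    {μ : Measure α} {f : α → α → E → E → ℝ}
    (hfm : Measurable fun q : (α × α) × E × E => f q.1.1 q.1.2 q.2.1 q.2.2)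
    {w : α → E} (hw : AEMeasurable w μ) :
    AEMeasurable (fun q : α × α => f q.1 q.2 (w q.1) (w q.2)) (μ.prod μ) :=
  hfm.comp_aemeasurable (aemeasurable_id.prodMk (hw.comp_fst.prodMk hw.comp_snd))

section NonlocalJ

variable {α E : Type*} [MeasurableSpace α] {μ : Measure α} [NormedAddCommGroup E]
  [MeasurableSpace E] [BorelSpace E] {p C : ℝ} {a : α × α → ℝ} {β : α → ℝ}
  {f : α → α → E → E → ℝ}

/-- `f⁻` is `p`-bounded, with the constant `C` and the functions `α = a`, `β` made explicit. -/
structure NegPartPBounded (μ : Measure α) (p C : ℝ) (a : α × α → ℝ) (β : α → ℝ)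
    (f : α → α → E → E → ℝ) : Prop where
  nonneg_C : 0 ≤ C
  nonneg_a : ∀ q, 0 ≤ a q
  nonneg_β : ∀ x, 0 ≤ β x
  integrable_a : Integrable a (μ.prod μ)
  integrable_β : Integrable β μ
  neg_pBound_le : ∀ᵐ q ∂μ.prod μ, ∀ w z : E, -pBound C p a β q w z ≤ f q.1 q.2 w z

namespace NegPartPBounded

lemma aemeasurable_pBound_comp (hf : NegPartPBounded μ p C a β f) {w : α → E}
    (hw : AEMeasurable w μ) :
    AEMeasurable (fun q => pBound C p a β q (w q.1) (w q.2)) (μ.prod μ) := by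
  have hβ := hf.integrable_β.aemeasurable
  have hwp : AEMeasurable (fun x => ‖w x‖ ^ p) μ := hw.norm.pow_const p
  exact ((hf.integrable_a.aemeasurable.add (hβ.comp_fst.mul hwp.comp_snd)).add
    (hβ.comp_snd.mul hwp.comp_fst)).add
    ((aemeasurable_const.mul hwp.comp_fst).mul hwp.comp_snd)

lemma lintegral_ofReal_pBound [SFinite μ] (hf : NegPartPBounded μ p C a β f) (hp : 0 < p)
    {w : α → E} (hw : AEMeasurable w μ) :
    ∫⁻ q, ENNReal.ofReal (pBound C p a β q (w q.1) (w q.2)) ∂μ.prod μ =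
      (∫⁻ q, ENNReal.ofReal (a q) ∂μ.prod μ) +
        (∫⁻ x, ENNReal.ofReal (β x) ∂μ) * eLpNorm w (ENNReal.ofReal p) μ ^ p +
        eLpNorm w (ENNReal.ofReal p) μ ^ p * (∫⁻ x, ENNReal.ofReal (β x) ∂μ) +
        ENNReal.ofReal C * eLpNorm w (ENNReal.ofReal p) μ ^ p *
          eLpNorm w (ENNReal.ofReal p) μ ^ p := by
  have hβ : AEMeasurable (fun x => ENNReal.ofReal (β x)) μ :=
    hf.integrable_β.aemeasurable.ennreal_ofReal
  have hwp : AEMeasurable (fun x => ENNReal.ofReal (‖w x‖ ^ p)) μ :=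
    (hw.norm.pow_const p).ennreal_ofReal
  have hCwp : AEMeasurable (fun x => ENNReal.ofReal C * ENNReal.ofReal (‖w x‖ ^ p)) μ :=
    hwp.const_mul _
  simp_rw [ofReal_pBound hf.nonneg_C hf.nonneg_a hf.nonneg_β]
  rw [lintegral_add_right' _ (hCwp.comp_fst.fun_mul hwp.comp_snd),
    lintegral_add_right' _ (hwp.comp_fst.fun_mul hβ.comp_snd),
    lintegral_add_right' _ (hβ.comp_fst.fun_mul hwp.comp_snd), lintegral_prod_mul hβ hwp,
    lintegral_prod_mul hwp hβ, lintegral_prod_mul hCwp hwp,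
    lintegral_const_mul' _ _ ofReal_ne_top, lintegral_enorm_rpow_eq_eLpNorm_rpow hp]

lemma lintegral_ofReal_pBound_ne_top [SFinite μ] (hf : NegPartPBounded μ p C a β f)
    (hp : 0 < p) {w : α → E} (hw : MemLp w (ENNReal.ofReal p) μ) :
    ∫⁻ q, ENNReal.ofReal (pBound C p a β q (w q.1) (w q.2)) ∂μ.prod μ ≠ ⊤ := by
  have hT : eLpNorm w (ENNReal.ofReal p) μ ^ p ≠ ⊤ :=
    (rpow_lt_top_of_nonneg hp.le hw.eLpNorm_ne_top).ne
  have hA := hf.integrable_a.lintegral_lt_top.ne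
  have hB := hf.integrable_β.lintegral_lt_top.ne
  rw [hf.lintegral_ofReal_pBound hp hw.1.aemeasurable]
  finiteness

lemma tendsto_lintegral_ofReal_pBound [SFinite μ] (hf : NegPartPBounded μ p C a β f)
    (hp : 0 < p) {W : ℕ → α → E} {v : α → E} (hW : ∀ k, AEMeasurable (W k) μ)
    (hv : MemLp v (ENNReal.ofReal p) μ)
    (hnorm : Tendsto (fun k => eLpNorm (W k) (ENNReal.ofReal p) μ) atTop
      (𝓝 (eLpNorm v (ENNReal.ofReal p) μ))) :
    Tendsto (fun k => ∫⁻ q, ENNReal.ofReal (pBound C p a β q (W k q.1) (W k q.2)) ∂μ.prod μ)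
      atTop (𝓝 (∫⁻ q, ENNReal.ofReal (pBound C p a β q (v q.1) (v q.2)) ∂μ.prod μ)) := by
  have hT : Tendsto (fun k => eLpNorm (W k) (ENNReal.ofReal p) μ ^ p) atTop
      (𝓝 (eLpNorm v (ENNReal.ofReal p) μ ^ p)) :=
    (ENNReal.continuous_rpow_const.tendsto _).comp hnorm
  have hTv : eLpNorm v (ENNReal.ofReal p) μ ^ p ≠ ⊤ :=
    (rpow_lt_top_of_nonneg hp.le hv.eLpNorm_ne_top).ne
  have hB := hf.integrable_β.lintegral_lt_top.ne
  simp_rw [hf.lintegral_ofReal_pBound hp (hW _), hf.lintegral_ofReal_pBound hp hv.1.aemeasurable]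
  exact ((tendsto_const_nhds.add (ENNReal.Tendsto.const_mul hT (Or.inr hB))).add
    (ENNReal.Tendsto.mul_const hT (Or.inr hB))).add
    (ENNReal.Tendsto.mul (ENNReal.Tendsto.const_mul hT (Or.inr ofReal_ne_top)) (Or.inr hTv) hT
      (Or.inr (mul_ne_top ofReal_ne_top hTv)))

lemma nonlocalJ_eq_sub [SFinite μ] (hf : NegPartPBounded μ p C a β f) (hp : 0 < p)
    (hfm : Measurable fun q : (α × α) × E × E => f q.1.1 q.1.2 q.2.1 q.2.2)
    {w : α → E} (hw : MemLp w (ENNReal.ofReal p) μ) :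
    nonlocalJ μ f w =
      ((∫⁻ q, ENNReal.ofReal (f q.1 q.2 (w q.1) (w q.2) + pBound C p a β q (w q.1) (w q.2))
        ∂μ.prod μ : ℝ≥0∞) : EReal) -
      ∫⁻ q, ENNReal.ofReal (pBound C p a β q (w q.1) (w q.2)) ∂μ.prod μ := by
  have hfw := aemeasurable_nonlocal_integrand hfm hw.1.aemeasurable
  rw [nonlocalJ, lintegral_lintegral hfw.ennreal_ofReal,
    lintegral_lintegral hfw.neg.ennreal_ofReal]
  refine lintegral_ofReal_sub_lintegral_ofReal_neg hfw
    (hf.aemeasurable_pBound_comp hw.1.aemeasurable)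
    (fun q => pBound_nonneg hf.nonneg_C hf.nonneg_a hf.nonneg_β q _ _) ?_
    (hf.lintegral_ofReal_pBound_ne_top hp hw)
  filter_upwards [hf.neg_pBound_le] with q hq
  linarith [hq (w q.1) (w q.2)]

lemma lintegral_ofReal_add_pBound_le_liminf (hf : NegPartPBounded μ p C a β f) (hp : 0 ≤ p)
    (hfm : Measurable fun q : (α × α) × E × E => f q.1.1 q.1.2 q.2.1 q.2.2)
    (hlsc : ∀ᵐ q ∂μ.prod μ, LowerSemicontinuous fun wz : E × E => f q.1 q.2 wz.1 wz.2)
    {W : ℕ → α → E} {v : α → E} (hW : ∀ k, AEMeasurable (W k) μ)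
    (hae : ∀ᵐ x ∂μ, Tendsto (fun k => W k x) atTop (𝓝 (v x))) :
    ∫⁻ q, ENNReal.ofReal (f q.1 q.2 (v q.1) (v q.2) + pBound C p a β q (v q.1) (v q.2))
        ∂μ.prod μ ≤
      liminf (fun k => ∫⁻ q, ENNReal.ofReal
        (f q.1 q.2 (W k q.1) (W k q.2) + pBound C p a β q (W k q.1) (W k q.2)) ∂μ.prod μ)
        atTop := by
  have hΦ : ∀ᵐ q ∂μ.prod μ, LowerSemicontinuous fun wz : E × E =>
      ENNReal.ofReal (f q.1 q.2 wz.1 wz.2 + pBound C p a β q wz.1 wz.2) := by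
    filter_upwards [hlsc] with q hq
    exact ENNReal.continuous_ofReal.comp_lowerSemicontinuous
      (hq.add (continuous_pBound hp q).lowerSemicontinuous) fun _ _ h => ofReal_le_ofReal h
  have hz : ∀ᵐ q ∂μ.prod μ,
      Tendsto (fun k => (W k q.1, W k q.2)) atTop (𝓝 (v q.1, v q.2)) := by
    filter_upwards [Measure.quasiMeasurePreserving_fst.ae hae,
      Measure.quasiMeasurePreserving_snd.ae hae] with q h₁ h₂
    exact h₁.prodMk_nhds h₂
  have hm (k : ℕ) : AEMeasurable (fun q : α × α => ENNReal.ofReal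
      (f q.1 q.2 (W k q.1) (W k q.2) + pBound C p a β q (W k q.1) (W k q.2))) (μ.prod μ) :=
    ((aemeasurable_nonlocal_integrand hfm (hW k)).add
      (hf.aemeasurable_pBound_comp (hW k))).ennreal_ofReal
  exact lintegral_le_liminf_of_lowerSemicontinuous
    (Φ := fun (q : α × α) (wz : E × E) =>
      ENNReal.ofReal (f q.1 q.2 wz.1 wz.2 + pBound C p a β q wz.1 wz.2))
    (z := fun k q => (W k q.1, W k q.2)) (z₀ := fun q => (v q.1, v q.2)) hΦ hz hm

theorem nonlocalJ_le_liminf_of_tendsto_ae [SFinite μ] (hf : NegPartPBounded μ p C a β f)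
    (hp : 0 < p) (hfm : Measurable fun q : (α × α) × E × E => f q.1.1 q.1.2 q.2.1 q.2.2)
    (hlsc : ∀ᵐ q ∂μ.prod μ, LowerSemicontinuous fun wz : E × E => f q.1 q.2 wz.1 wz.2)
    {W : ℕ → α → E} {v : α → E} (hW : ∀ k, MemLp (W k) (ENNReal.ofReal p) μ)
    (hv : MemLp v (ENNReal.ofReal p) μ)
    (hae : ∀ᵐ x ∂μ, Tendsto (fun k => W k x) atTop (𝓝 (v x)))
    (hnorm : Tendsto (fun k => eLpNorm (W k) (ENNReal.ofReal p) μ) atTop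
      (𝓝 (eLpNorm v (ENNReal.ofReal p) μ))) :
    nonlocalJ μ f v ≤ liminf (fun k => nonlocalJ μ f (W k)) atTop := by
  have hWm (k : ℕ) : AEMeasurable (W k) μ := (hW k).1.aemeasurable
  rw [hf.nonlocalJ_eq_sub hp hfm hv,
    liminf_congr (Eventually.of_forall fun k => hf.nonlocalJ_eq_sub hp hfm (hW k))]
  exact EReal.coe_ennreal_sub_le_liminf_sub
    (hf.lintegral_ofReal_add_pBound_le_liminf hp.le hfm hlsc hWm hae)
    (hf.tendsto_lintegral_ofReal_pBound hp hWm hv hnorm)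

end NegPartPBounded

end NonlocalJ

theorem stmt_7_general (m n : ℕ)
    (X : Set (Fin m → ℝ))
    (p : ℝ) (hp : 1 ≤ p)
    (f : (Fin m → ℝ) → (Fin m → ℝ) → EuclideanSpace ℝ (Fin n) → EuclideanSpace ℝ (Fin n) → ℝ)
    (hfmeas : Measurable (fun q : ((Fin m → ℝ) × (Fin m → ℝ)) ×
      (EuclideanSpace ℝ (Fin n)) × (EuclideanSpace ℝ (Fin n)) => f q.1.1 q.1.2 q.2.1 q.2.2))
    (hpbdd : ∃ (C : ℝ) (α : (Fin m → ℝ) × (Fin m → ℝ) → ℝ) (β : (Fin m → ℝ) → ℝ),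
      0 < C ∧ (∀ q, 0 ≤ α q) ∧ (∀ x, 0 ≤ β x) ∧
      Integrable α ((volume.restrict X).prod (volume.restrict X)) ∧
      Integrable β (volume.restrict X) ∧
      ∀ᵐ q ∂((volume.restrict X).prod (volume.restrict X)),
        ∀ w z : EuclideanSpace ℝ (Fin n),
          -(α q + β q.1 * ‖z‖ ^ p + β q.2 * ‖w‖ ^ p + C * ‖w‖ ^ p * ‖z‖ ^ p) ≤
            f q.1 q.2 w z)
    (hlsc : ∀ᵐ q ∂((volume.restrict X).prod (volume.restrict X)),
      LowerSemicontinuous (fun wz : (EuclideanSpace ℝ (Fin n)) × (EuclideanSpace ℝ (Fin n)) =>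
        f q.1 q.2 wz.1 wz.2)) :
    ∀ (u : ℕ → (Fin m → ℝ) → EuclideanSpace ℝ (Fin n))
      (v : (Fin m → ℝ) → EuclideanSpace ℝ (Fin n)),
      (∀ k, MemLp (u k) (ENNReal.ofReal p) (volume.restrict X)) →
      MemLp v (ENNReal.ofReal p) (volume.restrict X) →
      Tendsto (fun k => eLpNorm (u k - v) (ENNReal.ofReal p) (volume.restrict X))
        atTop (𝓝 0) →
      nonlocalJ (volume.restrict X) f v ≤
        liminf (fun k => nonlocalJ (volume.restrict X) f (u k)) atTop := by
  intro u v hu hv huv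
  obtain ⟨C, a, β, hC, ha, hβ, hai, hβi, hbd⟩ := hpbdd
  have hf : NegPartPBounded (volume.restrict X) p C a β f := ⟨hC.le, ha, hβ, hai, hβi, hbd⟩
  have hp₀ : 0 < p := by linarith
  refine le_liminf_of_forall_exists_subseq fun φ hφ => ?_
  have huvφ := huv.comp hφ.tendsto_atTop
  obtain ⟨ψ, hψ, hae⟩ := (tendstoInMeasure_of_tendsto_eLpNorm (ofReal_pos.2 hp₀).ne'
    (fun k => (hu (φ k)).1) hv.1 huvφ).exists_seq_tendsto_ae
  refine ⟨ψ, hψ, hf.nonlocalJ_le_liminf_of_tendsto_ae hp₀ hfmeas hlsc (fun k => hu _) hv hae ?_⟩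
  exact tendsto_eLpNorm_of_tendsto_eLpNorm_sub (one_le_ofReal.2 hp) (fun k => (hu _).1) hv
    (huvφ.comp hψ.tendsto_atTop)

theorem stmt_7 (m n : ℕ) (hm : 0 < m) (hn : 0 < n)
    (X : Set (Fin m → ℝ)) (hXmeas : MeasurableSet X) (hXbdd : Bornology.IsBounded X)
    (p : ℝ) (hp : 1 ≤ p)
    (f : (Fin m → ℝ) → (Fin m → ℝ) → EuclideanSpace ℝ (Fin n) → EuclideanSpace ℝ (Fin n) → ℝ)
    (hfmeas : Measurable (fun q : ((Fin m → ℝ) × (Fin m → ℝ)) ×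
      (EuclideanSpace ℝ (Fin n)) × (EuclideanSpace ℝ (Fin n)) => f q.1.1 q.1.2 q.2.1 q.2.2))
    (hfsymm : ∀ x y w z, f x y w z = f y x z w)
    (hpbdd : ∃ (C : ℝ) (α : (Fin m → ℝ) × (Fin m → ℝ) → ℝ) (β : (Fin m → ℝ) → ℝ),
      0 < C ∧ (∀ q, 0 ≤ α q) ∧ (∀ x, 0 ≤ β x) ∧
      Integrable α ((volume.restrict X).prod (volume.restrict X)) ∧
      Integrable β (volume.restrict X) ∧
      ∀ᵐ q ∂((volume.restrict X).prod (volume.restrict X)),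
        ∀ w z : EuclideanSpace ℝ (Fin n),
          -(α q + β q.1 * ‖z‖ ^ p + β q.2 * ‖w‖ ^ p + C * ‖w‖ ^ p * ‖z‖ ^ p) ≤
            f q.1 q.2 w z)
    (hlsc : ∀ᵐ q ∂((volume.restrict X).prod (volume.restrict X)),
      LowerSemicontinuous (fun wz : (EuclideanSpace ℝ (Fin n)) × (EuclideanSpace ℝ (Fin n)) =>
        f q.1 q.2 wz.1 wz.2)) :
    ∀ (u : ℕ → (Fin m → ℝ) → EuclideanSpace ℝ (Fin n))
      (v : (Fin m → ℝ) → EuclideanSpace ℝ (Fin n)),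
      (∀ k, MemLp (u k) (ENNReal.ofReal p) (volume.restrict X)) →
      MemLp v (ENNReal.ofReal p) (volume.restrict X) →
      Tendsto (fun k => eLpNorm (u k - v) (ENNReal.ofReal p) (volume.restrict X))
        atTop (𝓝 0) →
      nonlocalJ (volume.restrict X) f v ≤
        liminf (fun k => nonlocalJ (volume.restrict X) f (u k)) atTop :=
  stmt_7_general m n X p hp f hfmeas hpbdd hlsc
end

section
/- Let f : X × X × ℝⁿ × ℝⁿ → ℝ be a pairwise symmetric, measurable function such that for every M > 0 there exists a nonnegative function α_M ∈ L^1(X×X) with f(x,y,w,z) ≥ −α_M(x,y) for almost all (x,y) ∈ X×X and all w, z ∈ ℝⁿ with |w| ≤ M and |z| ≤ M. Assume that for almost all (x,y) ∈ X×X the map (w,z) ↦ f(x,y,w,z) is lower semi-continuous on ℝⁿ × ℝⁿ. Then the non-local functional J^∞_f is sequentially lower semi-continuous with respect to the norm topology on L^∞(X;ℝⁿ): for every sequence (u_k) converging to u in the L^∞ norm, liminf_{k→∞} J^∞_f(u_k) ≥ J^∞_f(u). -/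
open MeasureTheory ENNReal Filter Topology

lemma EReal.coe_ennreal_sub_eq_of_add_eq_s8 {P N A I : ℝ≥0∞} (hN : N ≠ ∞) (hI : I ≠ ∞)
    (h : P + I = A + N) : (P : EReal) - N = A - I := by
  lift N to NNReal using hN
  lift I to NNReal using hI
  have h' : (P : EReal) + (I : ℝ) = A + (N : ℝ) := by
    rw [← EReal.coe_nnreal_eq_coe_real, ← EReal.coe_nnreal_eq_coe_real, ← EReal.coe_ennreal_add,
      ← EReal.coe_ennreal_add, h]
  rw [EReal.coe_nnreal_eq_coe_real, EReal.coe_nnreal_eq_coe_real]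
  calc (P : EReal) - (N : ℝ) = (P + (I : ℝ)) - (I : ℝ) - (N : ℝ) := by
        rw [EReal.add_sub_cancel_right]
    _ = (A + (N : ℝ)) - (I : ℝ) - (N : ℝ) := by rw [h']
    _ = A - (I : ℝ) := by
        rw [sub_eq_add_neg _ ((I : ℝ) : EReal), add_right_comm, EReal.add_sub_cancel_right,
          sub_eq_add_neg]

lemma EReal.coe_ennreal_sub_le_liminf {ι : Type*} {l : Filter ι} {B : ℝ≥0∞} {A : ι → ℝ≥0∞}
    (c : EReal) (h : B ≤ liminf A l) :
    (B : EReal) - c ≤ liminf (fun k => (A k : EReal) - c) l := by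
  rcases l.eq_or_neBot with rfl | _
  · simp
  have hcoe : ((liminf A l : ℝ≥0∞) : EReal) = liminf (fun k => (A k : EReal)) l :=
    Monotone.map_liminf_of_continuousAt (fun _ _ => EReal.coe_ennreal_le_coe_ennreal_iff.2) A
      continuous_coe_ennreal_ereal.continuousAt
  calc (B : EReal) - c ≤ liminf (fun k => (A k : EReal)) l + liminf (fun _ => -c) l := by
        rw [sub_eq_add_neg, ← hcoe, liminf_const]
        gcongr
        exact EReal.coe_ennreal_le_coe_ennreal_iff.2 h
    _ ≤ liminf (fun k => (A k : EReal) - c) l := EReal.le_liminf_add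

lemma ENNReal.ofReal_add_ofReal_eq {t a : ℝ} (ha : 0 ≤ a) (h : -a ≤ t) :
    ENNReal.ofReal t + ENNReal.ofReal a = ENNReal.ofReal (t + a) + ENNReal.ofReal (-t) := by
  rcases le_or_gt 0 t with ht | ht
  · rw [ENNReal.ofReal_of_nonpos (neg_nonpos.2 ht), ENNReal.ofReal_add ht ha, add_zero]
  · rw [ENNReal.ofReal_of_nonpos ht.le, zero_add,
      ← ENNReal.ofReal_add (by linarith) (by linarith)]
    ring_nf

lemma ENNReal.ofReal_add_le_liminf {ι : Type*} {l : Filter ι} {x c : ℝ} {y : ι → ℝ}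
    (h : (x : EReal) ≤ liminf (fun k => (y k : EReal)) l) :
    ENNReal.ofReal (x + c) ≤ liminf (fun k => ENNReal.ofReal (y k + c)) l := by
  refine (le_liminf_iff).2 fun b hb => ?_
  have hb_top : b ≠ ∞ := (hb.trans ENNReal.ofReal_lt_top).ne
  have hbx : ((b.toReal - c : ℝ) : EReal) < x := by
    have := (ENNReal.lt_ofReal_iff_toReal_lt hb_top).1 hb
    exact EReal.coe_lt_coe_iff.2 (by linarith)
  filter_upwards [eventually_lt_of_lt_liminf (hbx.trans_le h)] with k hk
  exact (ENNReal.lt_ofReal_iff_toReal_lt hb_top).2 (by linarith [EReal.coe_lt_coe_iff.1 hk])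

lemma LowerSemicontinuous.coe_le_liminf_comp {Y ι : Type*} [TopologicalSpace Y] {l : Filter ι}
    {g : Y → ℝ} (hg : LowerSemicontinuous g) {p : ι → Y} {y : Y} (hp : Tendsto p l (𝓝 y)) :
    (g y : EReal) ≤ liminf (fun k => (g (p k) : EReal)) l := by
  refine (le_liminf_iff).2 fun c hc => ?_
  obtain ⟨r, hcr, hr⟩ := EReal.exists_between_coe_real hc
  filter_upwards [hp.eventually (hg y r (EReal.coe_lt_coe_iff.1 hr))] with k hk
  exact hcr.trans (EReal.coe_lt_coe_iff.2 hk)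

namespace MeasureTheory

section ErealIntegral

variable {β : Type*} [MeasurableSpace β] {ν : Measure β}

noncomputable def erealIntegral (ν : Measure β) (F : β → ℝ) : EReal :=
  ((∫⁻ q, ENNReal.ofReal (F q) ∂ν : ℝ≥0∞) : EReal) -
    ((∫⁻ q, ENNReal.ofReal (-F q) ∂ν : ℝ≥0∞) : EReal)

lemma erealIntegral_eq_lintegral_add_sub {F a : β → ℝ} (ha : Integrable a ν)
    (ha₀ : 0 ≤ᵐ[ν] a) (hF : AEMeasurable F ν) (hFa : ∀ᵐ q ∂ν, -a q ≤ F q) :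
    erealIntegral ν F = ((∫⁻ q, ENNReal.ofReal (F q + a q) ∂ν : ℝ≥0∞) : EReal) -
      ((∫⁻ q, ENNReal.ofReal (a q) ∂ν : ℝ≥0∞) : EReal) := by
  have hI : ∫⁻ q, ENNReal.ofReal (a q) ∂ν ≠ ∞ :=
    (lintegral_ofReal_ne_top_iff_integrable ha.aestronglyMeasurable ha₀).2 ha
  refine EReal.coe_ennreal_sub_eq_of_add_eq_s8 (ne_top_of_le_ne_top hI ?_) hI ?_
  · refine lintegral_mono_ae ?_
    filter_upwards [hFa] with q hq
    exact ENNReal.ofReal_le_ofReal (by linarith)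
  · rw [← lintegral_add_right' _ ha.aemeasurable.ennreal_ofReal,
      ← lintegral_add_right' _ (g := fun q => ENNReal.ofReal (-F q)) hF.neg.ennreal_ofReal]
    refine lintegral_congr_ae ?_
    filter_upwards [ha₀, hFa] with q hq₀ hq
    exact ENNReal.ofReal_add_ofReal_eq hq₀ hq

lemma erealIntegral_le_liminf {ι : Type*} {l : Filter ι} [l.IsCountablyGenerated]
    {F a : β → ℝ} {G : ι → β → ℝ} (ha : Integrable a ν) (ha₀ : 0 ≤ᵐ[ν] a)
    (hF : AEMeasurable F ν) (hG : ∀ k, AEMeasurable (G k) ν)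
    (hFa : ∀ᵐ q ∂ν, -a q ≤ F q) (hGa : ∀ᶠ k in l, ∀ᵐ q ∂ν, -a q ≤ G k q)
    (hlim : ∀ᵐ q ∂ν, (F q : EReal) ≤ liminf (fun k => (G k q : EReal)) l) :
    erealIntegral ν F ≤ liminf (fun k => erealIntegral ν (G k)) l := by
  rw [erealIntegral_eq_lintegral_add_sub ha ha₀ hF hFa,
    liminf_congr (hGa.mono fun k hk => erealIntegral_eq_lintegral_add_sub ha ha₀ (hG k) hk)]
  refine EReal.coe_ennreal_sub_le_liminf _ ?_
  calc ∫⁻ q, ENNReal.ofReal (F q + a q) ∂ν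
      ≤ ∫⁻ q, liminf (fun k => ENNReal.ofReal (G k q + a q)) l ∂ν :=
        lintegral_mono_ae (hlim.mono fun q hq => ENNReal.ofReal_add_le_liminf hq)
    _ ≤ liminf (fun k => ∫⁻ q, ENNReal.ofReal (G k q + a q) ∂ν) l :=
        lintegral_liminf_le' fun k => ((hG k).add ha.aemeasurable).ennreal_ofReal

end ErealIntegral

section EssSup

variable {α E : Type*} [MeasurableSpace α] {μ : Measure α} [NormedAddCommGroup E]

lemma ae_tendsto_of_tendsto_eLpNorm_top {ι : Type*} [Countable ι] {l : Filter ι}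
    {u : ι → α → E} {v : α → E} (h : Tendsto (fun k => eLpNorm (u k - v) ∞ μ) l (𝓝 0)) :
    ∀ᵐ x ∂μ, Tendsto (fun k => u k x) l (𝓝 (v x)) := by
  filter_upwards [ae_all_iff.2 fun k => ae_le_eLpNormEssSup (μ := μ) (f := u k - v)] with x hx
  rw [tendsto_iff_edist_tendsto_0]
  refine tendsto_of_tendsto_of_tendsto_of_le_of_le tendsto_const_nhds h (fun _ => zero_le)
    fun k => ?_
  simpa [edist_eq_enorm_sub, eLpNorm_exponent_top] using hx k

lemma MemLp.ae_norm_le_toReal_eLpNorm_top {v : α → E} (hv : MemLp v ∞ μ) :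
    ∀ᵐ x ∂μ, ‖v x‖ ≤ (eLpNorm v ∞ μ).toReal := by
  filter_upwards [ae_le_eLpNormEssSup (μ := μ) (f := v)] with x hx
  rw [← toReal_enorm]
  exact ENNReal.toReal_mono hv.eLpNorm_ne_top (by rwa [eLpNorm_exponent_top])

lemma eventually_ae_norm_le_of_tendsto_eLpNorm_top {ι : Type*} {l : Filter ι}
    {u : ι → α → E} {v : α → E} (hv : MemLp v ∞ μ)
    (h : Tendsto (fun k => eLpNorm (u k - v) ∞ μ) l (𝓝 0)) :
    ∀ᶠ k in l, ∀ᵐ x ∂μ, ‖u k x‖ ≤ (eLpNorm v ∞ μ).toReal + 1 := by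
  filter_upwards [h.eventually_lt_const one_pos] with k hk
  filter_upwards [hv.ae_norm_le_toReal_eLpNorm_top, ae_le_eLpNormEssSup (μ := μ) (f := u k - v)]
    with x hvx hx
  have hdist : ‖u k x - v x‖ ≤ 1 := by
    have hx' : ‖u k x - v x‖ₑ ≤ 1 := by
      simpa [eLpNorm_exponent_top] using hx.trans hk.le
    simpa using ENNReal.toReal_mono one_ne_top hx'
  calc ‖u k x‖ = ‖v x + (u k x - v x)‖ := by rw [add_sub_cancel]
    _ ≤ ‖v x‖ + ‖u k x - v x‖ := norm_add_le _ _
    _ ≤ _ := add_le_add hvx hdist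

end EssSup

end MeasureTheory

section Nonlocal

variable {α E : Type*} [MeasurableSpace α] {μ : Measure α} {f : α → α → E → E → ℝ}

def nonlocalIntegrand (f : α → α → E → E → ℝ) (g : α → E) (q : α × α) : ℝ :=
  f q.1 q.2 (g q.1) (g q.2)

lemma aemeasurable_nonlocalIntegrand [MeasurableSpace E]
    (hf : Measurable fun q : (α × α) × E × E => f q.1.1 q.1.2 q.2.1 q.2.2) {g : α → E}
    (hg : AEMeasurable g μ) : AEMeasurable (nonlocalIntegrand f g) (μ.prod μ) :=
  hf.comp_aemeasurable (aemeasurable_id.prodMk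
    ((hg.comp_quasiMeasurePreserving Measure.quasiMeasurePreserving_fst).prodMk
      (hg.comp_quasiMeasurePreserving Measure.quasiMeasurePreserving_snd)))

lemma nonlocalJ_eq_erealIntegral [SFinite μ] {g : α → E}
    (hg : AEMeasurable (nonlocalIntegrand f g) (μ.prod μ)) :
    nonlocalJ μ f g = erealIntegral (μ.prod μ) (nonlocalIntegrand f g) := by
  rw [nonlocalJ, erealIntegral, lintegral_prod _ hg.ennreal_ofReal,
    lintegral_prod (fun q => ENNReal.ofReal (-nonlocalIntegrand f g q)) hg.neg.ennreal_ofReal]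
  rfl

lemma ae_neg_le_nonlocalIntegrand [Norm E] {M : ℝ} {a : α × α → ℝ}
    (hfa : ∀ᵐ q ∂μ.prod μ, ∀ w z : E, ‖w‖ ≤ M → ‖z‖ ≤ M → -a q ≤ f q.1 q.2 w z)
    {g : α → E} (hg : ∀ᵐ x ∂μ, ‖g x‖ ≤ M) :
    ∀ᵐ q ∂μ.prod μ, -a q ≤ nonlocalIntegrand f g q := by
  filter_upwards [hfa, Measure.quasiMeasurePreserving_fst.ae hg,
    Measure.quasiMeasurePreserving_snd.ae hg] with q hq h₁ h₂
  exact hq _ _ h₁ h₂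

lemma ae_coe_nonlocalIntegrand_le_liminf [TopologicalSpace E] {ι : Type*} {l : Filter ι}
    (hf : ∀ᵐ q ∂μ.prod μ, LowerSemicontinuous fun wz : E × E => f q.1 q.2 wz.1 wz.2)
    {u : ι → α → E} {v : α → E} (hu : ∀ᵐ x ∂μ, Tendsto (fun k => u k x) l (𝓝 (v x))) :
    ∀ᵐ q ∂μ.prod μ, (nonlocalIntegrand f v q : EReal) ≤
      liminf (fun k => (nonlocalIntegrand f (u k) q : EReal)) l := by
  filter_upwards [hf, Measure.quasiMeasurePreserving_fst.ae hu,
    Measure.quasiMeasurePreserving_snd.ae hu] with q hq h₁ h₂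
  exact hq.coe_le_liminf_comp (h₁.prodMk_nhds h₂)

theorem nonlocalJ_le_liminf_of_ae_tendsto [NormedAddCommGroup E] [MeasurableSpace E] [SFinite μ]
    {ι : Type*} {l : Filter ι} [l.IsCountablyGenerated]
    (hf : Measurable fun q : (α × α) × E × E => f q.1.1 q.1.2 q.2.1 q.2.2)
    {M : ℝ} {a : α × α → ℝ} (ha : Integrable a (μ.prod μ)) (ha₀ : 0 ≤ᵐ[μ.prod μ] a)
    (hfa : ∀ᵐ q ∂μ.prod μ, ∀ w z : E, ‖w‖ ≤ M → ‖z‖ ≤ M → -a q ≤ f q.1 q.2 w z)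
    (hf_lsc : ∀ᵐ q ∂μ.prod μ, LowerSemicontinuous fun wz : E × E => f q.1 q.2 wz.1 wz.2)
    {u : ι → α → E} {v : α → E} (hu : ∀ k, AEMeasurable (u k) μ) (hv : AEMeasurable v μ)
    (hu_le : ∀ᶠ k in l, ∀ᵐ x ∂μ, ‖u k x‖ ≤ M) (hv_le : ∀ᵐ x ∂μ, ‖v x‖ ≤ M)
    (huv : ∀ᵐ x ∂μ, Tendsto (fun k => u k x) l (𝓝 (v x))) :
    nonlocalJ μ f v ≤ liminf (fun k => nonlocalJ μ f (u k)) l := by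
  have hJ (g : α → E) (hg : AEMeasurable g μ) :=
    nonlocalJ_eq_erealIntegral (aemeasurable_nonlocalIntegrand hf hg)
  simp only [hJ v hv, hJ _ (hu _)]
  exact erealIntegral_le_liminf ha ha₀ (aemeasurable_nonlocalIntegrand hf hv)
    (fun k => aemeasurable_nonlocalIntegrand hf (hu k)) (ae_neg_le_nonlocalIntegrand hfa hv_le)
    (hu_le.mono fun _ hk => ae_neg_le_nonlocalIntegrand hfa hk)
    (ae_coe_nonlocalIntegrand_le_liminf hf_lsc huv)

end Nonlocal

theorem stmt_8_general (m n : ℕ)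
    (X : Set (Fin m → ℝ))
    (f : (Fin m → ℝ) → (Fin m → ℝ) → EuclideanSpace ℝ (Fin n) → EuclideanSpace ℝ (Fin n) → ℝ)
    (hfmeas : Measurable (fun q : ((Fin m → ℝ) × (Fin m → ℝ)) ×
      (EuclideanSpace ℝ (Fin n)) × (EuclideanSpace ℝ (Fin n)) => f q.1.1 q.1.2 q.2.1 q.2.2))
    (hlb : ∀ M : ℝ, 0 < M → ∃ α : (Fin m → ℝ) × (Fin m → ℝ) → ℝ,
      (∀ q, 0 ≤ α q) ∧
      Integrable α ((volume.restrict X).prod (volume.restrict X)) ∧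
      ∀ᵐ q ∂((volume.restrict X).prod (volume.restrict X)),
        ∀ w z : EuclideanSpace ℝ (Fin n), ‖w‖ ≤ M → ‖z‖ ≤ M →
          -(α q) ≤ f q.1 q.2 w z)
    (hlsc : ∀ᵐ q ∂((volume.restrict X).prod (volume.restrict X)),
      LowerSemicontinuous (fun wz : (EuclideanSpace ℝ (Fin n)) × (EuclideanSpace ℝ (Fin n)) =>
        f q.1 q.2 wz.1 wz.2)) :
    ∀ (u : ℕ → (Fin m → ℝ) → EuclideanSpace ℝ (Fin n))
      (v : (Fin m → ℝ) → EuclideanSpace ℝ (Fin n)),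
      (∀ k, MemLp (u k) ⊤ (volume.restrict X)) →
      MemLp v ⊤ (volume.restrict X) →
      Tendsto (fun k => eLpNorm (u k - v) ⊤ (volume.restrict X)) atTop (𝓝 0) →
      nonlocalJ (volume.restrict X) f v ≤
        liminf (fun k => nonlocalJ (volume.restrict X) f (u k)) atTop := by
  intro u v hu hv huv
  obtain ⟨a, ha₀, ha, hfa⟩ := hlb ((eLpNorm v ⊤ (volume.restrict X)).toReal + 1) (by positivity)
  exact nonlocalJ_le_liminf_of_ae_tendsto hfmeas ha (ae_of_all _ ha₀) hfa hlsc
    (fun k => (hu k).aestronglyMeasurable.aemeasurable) hv.aestronglyMeasurable.aemeasurable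
    (eventually_ae_norm_le_of_tendsto_eLpNorm_top hv huv)
    (hv.ae_norm_le_toReal_eLpNorm_top.mono fun _ hx => by linarith)
    (ae_tendsto_of_tendsto_eLpNorm_top huv)

theorem stmt_8 (m n : ℕ) (hm : 0 < m) (hn : 0 < n)
    (X : Set (Fin m → ℝ)) (hXmeas : MeasurableSet X) (hXbdd : Bornology.IsBounded X)
    (f : (Fin m → ℝ) → (Fin m → ℝ) → EuclideanSpace ℝ (Fin n) → EuclideanSpace ℝ (Fin n) → ℝ)
    (hfmeas : Measurable (fun q : ((Fin m → ℝ) × (Fin m → ℝ)) ×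
      (EuclideanSpace ℝ (Fin n)) × (EuclideanSpace ℝ (Fin n)) => f q.1.1 q.1.2 q.2.1 q.2.2))
    (hfsymm : ∀ x y w z, f x y w z = f y x z w)
    (hlb : ∀ M : ℝ, 0 < M → ∃ α : (Fin m → ℝ) × (Fin m → ℝ) → ℝ,
      (∀ q, 0 ≤ α q) ∧
      Integrable α ((volume.restrict X).prod (volume.restrict X)) ∧
      ∀ᵐ q ∂((volume.restrict X).prod (volume.restrict X)),
        ∀ w z : EuclideanSpace ℝ (Fin n), ‖w‖ ≤ M → ‖z‖ ≤ M →
          -(α q) ≤ f q.1 q.2 w z)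
    (hlsc : ∀ᵐ q ∂((volume.restrict X).prod (volume.restrict X)),
      LowerSemicontinuous (fun wz : (EuclideanSpace ℝ (Fin n)) × (EuclideanSpace ℝ (Fin n)) =>
        f q.1 q.2 wz.1 wz.2)) :
    ∀ (u : ℕ → (Fin m → ℝ) → EuclideanSpace ℝ (Fin n))
      (v : (Fin m → ℝ) → EuclideanSpace ℝ (Fin n)),
      (∀ k, MemLp (u k) ⊤ (volume.restrict X)) →
      MemLp v ⊤ (volume.restrict X) →
      Tendsto (fun k => eLpNorm (u k - v) ⊤ (volume.restrict X)) atTop (𝓝 0) →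
      nonlocalJ (volume.restrict X) f v ≤
        liminf (fun k => nonlocalJ (volume.restrict X) f (u k)) atTop :=
  stmt_8_general m n X f hfmeas hlb hlsc
end

section
/- Let p ∈ [1,∞) and let f : X × X × ℝⁿ × ℝⁿ → ℝ be a pairwise symmetric, measurable function belonging to the class N_0^p, i.e. there exist a measurable function g : X × X × ℝⁿ → ℝ and a symmetric function h ∈ L^1(X×X) such that: (a) there exist α ∈ L^1(X) and C > 0 with ∫_X |g(x,y,w)| dy ≤ α(x) + C|w|^p for almost all x ∈ X and all w ∈ ℝⁿ; (b) ∫_X ∫_X h(x,y) dx dy = 0 and ∫_X g(x,y,w) dy = 0 for almost all x ∈ X and all w ∈ ℝⁿ; (c) f(x,y,w,z) = g(x,y,w) + g(y,x,z) + h(x,y) for almost all (x,y) ∈ X×X and all w, z ∈ ℝⁿ. Then for every u ∈ L^p(X;ℝⁿ) the function (x,y) ↦ f(x,y,u(x),u(y)) is integrable on X×X and ∫_X ∫_X f(x,y,u(x),u(y)) dx dy = 0. -/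
/-!
Decomposing `f(x,y,u x,u y) = G(x,y) + G(y,x) + h(x,y)` with `G(x,y) = g(x,y,u x)`, the growth
bound on `g` together with `u ∈ Lᵖ` makes `G` integrable on `X × X` (Tonelli), hence so is the
composed kernel. By Fubini, `∫∫ G = 0` because each slice `∫ g(x,y,w) dy` vanishes,
`∫∫ G(y,x)` equals `∫∫ G` by swapping the variables, and `∫∫ h = 0` by assumption.
-/

open MeasureTheory ENNReal Filter Topology

section Kernels

variable {α β E : Type*} [MeasurableSpace α] [MeasurableSpace β] [MeasurableSpace E]
  {μ : Measure α} {ν : Measure β}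

theorem integrable_prod_comp_of_lintegral_le [SFinite ν] {g : α → β → E → ℝ}
    (hg : Measurable fun r : (α × β) × E => g r.1.1 r.1.2 r.2)
    {v : α → E} (hv : AEMeasurable v μ) {B : α → E → ℝ}
    (hB : Integrable (fun x => B x (v x)) μ)
    (hbound : ∀ᵐ x ∂μ, ∀ w,
      ∫⁻ y, ENNReal.ofReal |g x y w| ∂ν ≤ ENNReal.ofReal (B x w)) :
    Integrable (fun r : α × β => g r.1 r.2 (v r.1)) (μ.prod ν) := by
  have hmeas : AEMeasurable (fun r : α × β => g r.1 r.2 (v r.1)) (μ.prod ν) :=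
    hg.comp_aemeasurable <| measurable_id.aemeasurable.prodMk <|
      hv.comp_quasiMeasurePreserving Measure.quasiMeasurePreserving_fst
  refine ⟨hmeas.aestronglyMeasurable, ?_⟩
  calc ∫⁻ r, ‖g r.1 r.2 (v r.1)‖ₑ ∂(μ.prod ν)
      = ∫⁻ x, ∫⁻ y, ENNReal.ofReal |g x y (v x)| ∂ν ∂μ := by
        simp only [← Real.enorm_eq_ofReal_abs]
        exact lintegral_prod _ hmeas.enorm
    _ ≤ ∫⁻ x, ENNReal.ofReal (B x (v x)) ∂μ :=
        lintegral_mono_ae <| hbound.mono fun x hx => hx (v x)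
    _ < ⊤ := hB.lintegral_lt_top

theorem integral_prod_eq_zero_of_ae_integral_eq_zero [SFinite μ] [SFinite ν]
    {G : α → β → ℝ}
    (hG : Integrable (fun r : α × β => G r.1 r.2) (μ.prod ν))
    (hzero : ∀ᵐ x ∂μ, ∫ y, G x y ∂ν = 0) :
    ∫ r, G r.1 r.2 ∂(μ.prod ν) = 0 := by
  rw [integral_prod _ hG, integral_congr_ae hzero, integral_zero]

theorem integrable_and_integral_eq_zero_of_ae_eq_add_swap [SFinite μ] {F G H : α → α → ℝ}
    (hG : Integrable (fun r : α × α => G r.1 r.2) (μ.prod μ))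
    (hGzero : ∀ᵐ x ∂μ, ∫ y, G x y ∂μ = 0)
    (hH : Integrable (fun r : α × α => H r.1 r.2) (μ.prod μ))
    (hHzero : ∫ r, H r.1 r.2 ∂(μ.prod μ) = 0)
    (hdecomp : ∀ᵐ r ∂(μ.prod μ), F r.1 r.2 = G r.1 r.2 + G r.2 r.1 + H r.1 r.2) :
    Integrable (fun r : α × α => F r.1 r.2) (μ.prod μ) ∧
      ∫ x, ∫ y, F x y ∂μ ∂μ = 0 := by
  have hGswap : Integrable (fun r : α × α => G r.2 r.1) (μ.prod μ) := hG.swap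
  have hGzero' : ∫ r, G r.1 r.2 ∂(μ.prod μ) = 0 :=
    integral_prod_eq_zero_of_ae_integral_eq_zero hG hGzero
  have hGswapzero : ∫ r, G r.2 r.1 ∂(μ.prod μ) = 0 :=
    (integral_prod_swap fun r : α × α => G r.1 r.2).trans hGzero'
  have hGsum : Integrable (fun r : α × α => G r.1 r.2 + G r.2 r.1) (μ.prod μ) := hG.add hGswap
  have hF : Integrable (fun r : α × α => F r.1 r.2) (μ.prod μ) :=
    (hGsum.add hH).congr (hdecomp.mono fun r hr => hr.symm)
  refine ⟨hF, ?_⟩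
  rw [← integral_prod _ hF, integral_congr_ae hdecomp, integral_add hGsum hH,
    integral_add hG hGswap, hGzero', hGswapzero, hHzero, add_zero, add_zero]

end Kernels

theorem stmt_13_general (m n : ℕ)
    (X : Set (Fin m → ℝ))
    (p : ℝ) (hp : 1 ≤ p)
    (f : (Fin m → ℝ) → (Fin m → ℝ) → EuclideanSpace ℝ (Fin n) → EuclideanSpace ℝ (Fin n) → ℝ)
    (g : (Fin m → ℝ) → (Fin m → ℝ) → EuclideanSpace ℝ (Fin n) → ℝ)
    (hgmeas : Measurable (fun r : ((Fin m → ℝ) × (Fin m → ℝ)) × EuclideanSpace ℝ (Fin n) =>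
      g r.1.1 r.1.2 r.2))
    (h : (Fin m → ℝ) → (Fin m → ℝ) → ℝ)
    (hhint : Integrable (fun r : (Fin m → ℝ) × (Fin m → ℝ) => h r.1 r.2)
      ((volume.restrict X).prod (volume.restrict X)))
    (hgbound : ∃ (α : (Fin m → ℝ) → ℝ) (C : ℝ), Integrable α (volume.restrict X) ∧ 0 < C ∧
      ∀ᵐ x ∂(volume.restrict X), ∀ w : EuclideanSpace ℝ (Fin n),
        ∫⁻ y, ENNReal.ofReal |g x y w| ∂(volume.restrict X) ≤
          ENNReal.ofReal (α x + C * ‖w‖ ^ p))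
    (hhzero : ∫ r, h r.1 r.2 ∂((volume.restrict X).prod (volume.restrict X)) = 0)
    (hgzero : ∀ᵐ x ∂(volume.restrict X), ∀ w : EuclideanSpace ℝ (Fin n),
      ∫ y, g x y w ∂(volume.restrict X) = 0)
    (hdecomp : ∀ᵐ r ∂((volume.restrict X).prod (volume.restrict X)),
      ∀ w z : EuclideanSpace ℝ (Fin n),
        f r.1 r.2 w z = g r.1 r.2 w + g r.2 r.1 z + h r.1 r.2) :
    ∀ u : (Fin m → ℝ) → EuclideanSpace ℝ (Fin n),
      MemLp u (ENNReal.ofReal p) (volume.restrict X) →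
      Integrable (fun r : (Fin m → ℝ) × (Fin m → ℝ) => f r.1 r.2 (u r.1) (u r.2))
        ((volume.restrict X).prod (volume.restrict X)) ∧
      ∫ x, ∫ y, f x y (u x) (u y) ∂(volume.restrict X) ∂(volume.restrict X) = 0 := by
  intro u hu
  obtain ⟨a, C, ha, -, hbound⟩ := hgbound
  have hp0 : 0 < p := one_pos.trans_le hp
  have hupow : Integrable (fun x => ‖u x‖ ^ p) (volume.restrict X) := by
    simpa [ENNReal.toReal_ofReal hp0.le] using
      hu.integrable_norm_rpow (by simpa using hp0) ENNReal.ofReal_ne_top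
  have hG := integrable_prod_comp_of_lintegral_le hgmeas hu.aestronglyMeasurable.aemeasurable
    (B := fun x w => a x + C * ‖w‖ ^ p) (ha.add (hupow.const_mul C)) hbound
  exact integrable_and_integral_eq_zero_of_ae_eq_add_swap (F := fun x y => f x y (u x) (u y))
    hG (hgzero.mono fun x hx => hx (u x)) hhint hhzero
    (hdecomp.mono fun r hr => hr (u r.1) (u r.2))

theorem stmt_13 (m n : ℕ) (hm : 0 < m) (hn : 0 < n)
    (X : Set (Fin m → ℝ)) (hXmeas : MeasurableSet X) (hXbdd : Bornology.IsBounded X)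
    (p : ℝ) (hp : 1 ≤ p)
    (f : (Fin m → ℝ) → (Fin m → ℝ) → EuclideanSpace ℝ (Fin n) → EuclideanSpace ℝ (Fin n) → ℝ)
    (hfmeas : Measurable (fun r : ((Fin m → ℝ) × (Fin m → ℝ)) ×
      (EuclideanSpace ℝ (Fin n)) × (EuclideanSpace ℝ (Fin n)) => f r.1.1 r.1.2 r.2.1 r.2.2))
    (hfsymm : ∀ x y w z, f x y w z = f y x z w)
    (g : (Fin m → ℝ) → (Fin m → ℝ) → EuclideanSpace ℝ (Fin n) → ℝ)
    (hgmeas : Measurable (fun r : ((Fin m → ℝ) × (Fin m → ℝ)) × EuclideanSpace ℝ (Fin n) =>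
      g r.1.1 r.1.2 r.2))
    (h : (Fin m → ℝ) → (Fin m → ℝ) → ℝ)
    (hhsymm : ∀ x y, h x y = h y x)
    (hhint : Integrable (fun r : (Fin m → ℝ) × (Fin m → ℝ) => h r.1 r.2)
      ((volume.restrict X).prod (volume.restrict X)))
    (hgbound : ∃ (α : (Fin m → ℝ) → ℝ) (C : ℝ), Integrable α (volume.restrict X) ∧ 0 < C ∧
      ∀ᵐ x ∂(volume.restrict X), ∀ w : EuclideanSpace ℝ (Fin n),
        ∫⁻ y, ENNReal.ofReal |g x y w| ∂(volume.restrict X) ≤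
          ENNReal.ofReal (α x + C * ‖w‖ ^ p))
    (hhzero : ∫ r, h r.1 r.2 ∂((volume.restrict X).prod (volume.restrict X)) = 0)
    (hgzero : ∀ᵐ x ∂(volume.restrict X), ∀ w : EuclideanSpace ℝ (Fin n),
      ∫ y, g x y w ∂(volume.restrict X) = 0)
    (hdecomp : ∀ᵐ r ∂((volume.restrict X).prod (volume.restrict X)),
      ∀ w z : EuclideanSpace ℝ (Fin n),
        f r.1 r.2 w z = g r.1 r.2 w + g r.2 r.1 z + h r.1 r.2) :
    ∀ u : (Fin m → ℝ) → EuclideanSpace ℝ (Fin n),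
      MemLp u (ENNReal.ofReal p) (volume.restrict X) →
      Integrable (fun r : (Fin m → ℝ) × (Fin m → ℝ) => f r.1 r.2 (u r.1) (u r.2))
        ((volume.restrict X).prod (volume.restrict X)) ∧
      ∫ x, ∫ y, f x y (u x) (u y) ∂(volume.restrict X) ∂(volume.restrict X) = 0 :=
  stmt_13_general m n X p hp f g hgmeas h hhint hgbound hhzero hgzero hdecomp
end

section
/- Let n = 1, p ∈ [1,∞), and let f : X × X × ℝ × ℝ → ℝ be p-regular. Suppose there exist a pairwise symmetric, measurable function f̃ : X × X × ℝ × ℝ → ℝ such that for almost all (x,y) ∈ X×X the map (w,z) ↦ f̃(x,y,w,z) is separately convex (convex in w for each fixed z and convex in z for each fixed w), together with a measurable function g : X × X × ℝ → ℝ and a symmetric function h ∈ L^1(X×X) satisfying ∫_X |g(x,y,w)| dy ≤ α(x) + C|w|^p for some α ∈ L^1(X) and C > 0, ∫_X ∫_X h(x,y) dx dy = 0, ∫_X g(x,y,w) dy = 0 for almost all x ∈ X and all w ∈ ℝ, and f(x,y,w,z) = f̃(x,y,w,z) + g(x,y,w) + g(y,x,z) + h(x,y) for almost all (x,y) ∈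 X×X and all w, z ∈ ℝ. Then for every ψ ∈ L^p(X), for almost all x ∈ X, the function Φ_{x,ψ} : ℝ → ℝ, Φ_{x,ψ}(w) = ∫_X f(x,y,w,ψ(y)) dy, is convex. -/
/-!
Since `∫ g(x,y,w) dy = 0`, `Φ_{x,ψ}(w) = ∫ (f(x,y,w,ψ y) - g(x,y,w)) dy`, and for a.e. `y` this
integrand equals `f̃(x,y,w,ψ y) + g(y,x,ψ y) + h(x,y)`, which is convex in `w`; an integral of
convex functions is convex. The real work is integrability in `y` of `f(x,y,w,ψ y)` for a.e. `x`
and all `w`. Apply the mean value theorem along `(0,0) → (w,0) → (w,ψ y)`; pairwise symmetry turns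
the `z`-derivative of `f(x,y,·,·)` into a `w`-derivative of `f(y,x,·,·)`, so the growth bounds
of `p`-regularity dominate `|f|` by `|f(x,y,0,0)|` plus functions of `y` that are integrable by
Hölder's inequality.
-/

open MeasureTheory ENNReal Filter Topology

lemma abs_sub_le_of_abs_deriv_le {φ : ℝ → ℝ} (hφ : Differentiable ℝ φ) {p A B : ℝ}
    (hp : 1 ≤ p) (hB : 0 ≤ B) (hd : ∀ s, |deriv φ s| ≤ A + B * |s| ^ (p - 1)) (z : ℝ) :
    |φ z - φ 0| ≤ A * |z| + B * |z| ^ p := by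
  have hbound : ∀ s ∈ Set.uIcc 0 z, ‖deriv φ s‖ ≤ A + B * |z| ^ (p - 1) := fun s hs => by
    have hsz : |s| ≤ |z| := by simpa using Set.abs_sub_left_of_mem_uIcc hs
    calc ‖deriv φ s‖ ≤ A + B * |s| ^ (p - 1) := hd s
      _ ≤ A + B * |z| ^ (p - 1) := by gcongr
  have hpow : |z| ^ p = |z| ^ (p - 1) * |z| := by
    rw [← Real.rpow_add_one' (abs_nonneg z) (by linarith), sub_add_cancel]
  calc |φ z - φ 0|
      ≤ (A + B * |z| ^ (p - 1)) * ‖z - 0‖ :=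
        (convex_uIcc 0 z).norm_image_sub_le_of_norm_deriv_le (fun s _ => hφ s) hbound
          Set.left_mem_uIcc Set.right_mem_uIcc
    _ = A * |z| + B * |z| ^ p := by rw [sub_zero, Real.norm_eq_abs, hpow]; ring

lemma abs_le_of_abs_partialDeriv_le {F : ℝ → ℝ → ℝ}
    (hF : Differentiable ℝ (fun wz : ℝ × ℝ => F wz.1 wz.2)) {p A B A' B' : ℝ} (hp : 1 ≤ p)
    (hB : 0 ≤ B) (hB' : 0 ≤ B') {w z : ℝ}
    (hdw : ∀ s, |deriv (fun s => F s 0) s| ≤ A + B * |s| ^ (p - 1))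
    (hdz : ∀ s, |deriv (F w) s| ≤ A' + B' * |s| ^ (p - 1)) :
    |F w z| ≤ |F 0 0| + (A * |w| + B * |w| ^ p) + (A' * |z| + B' * |z| ^ p) := by
  have hw := abs_sub_le_of_abs_deriv_le (φ := fun s => F s 0)
    (hF.comp (differentiable_id.prodMk (differentiable_const 0))) hp hB hdw w
  have hz := abs_sub_le_of_abs_deriv_le (φ := F w)
    (hF.comp ((differentiable_const w).prodMk differentiable_id)) hp hB' hdz z
  calc |F w z| = |(F w z - F w 0) + (F w 0 - F 0 0) + F 0 0| := by ring_nf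
    _ ≤ |F w z - F w 0| + |F w 0 - F 0 0| + |F 0 0| := abs_add_three _ _ _
    _ ≤ _ := by linarith

section

variable {α : Type*} [MeasurableSpace α] {μ : Measure α}

lemma integrable_mul_abs_of_memLp {p : ℝ} {q : ℝ≥0∞} (hpq : (ENNReal.ofReal p)⁻¹ + q⁻¹ = 1)
    {a ψ : α → ℝ} (ha : MemLp a q μ) (hψ : MemLp ψ (ENNReal.ofReal p) μ) :
    Integrable (fun y => a y * |ψ y|) μ :=
  haveI : ENNReal.HolderTriple q (ENNReal.ofReal p) 1 := ⟨by rw [inv_one, add_comm, hpq]⟩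
  ha.integrable_mul hψ.abs

lemma integrable_of_lintegral_ofReal_abs_le {g : α → ℝ} (hg : AEStronglyMeasurable g μ) {c : ℝ}
    (h : ∫⁻ y, ENNReal.ofReal |g y| ∂μ ≤ ENNReal.ofReal c) : Integrable g μ :=
  ⟨hg, (hasFiniteIntegral_iff_norm g).2 (h.trans_lt ofReal_lt_top)⟩

lemma ae_forall_integrable_of_abs_le_of_abs_deriv_le [SFinite μ] {p : ℝ} {q : ℝ≥0∞}
    (hp : 1 ≤ p) (hpq : (ENNReal.ofReal p)⁻¹ + q⁻¹ = 1) {f : α → α → ℝ → ℝ → ℝ}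
    (hfsymm : ∀ x y w z, f x y w z = f y x z w)
    (hfmeas : Measurable (fun r : (α × α) × ℝ × ℝ => f r.1.1 r.1.2 r.2.1 r.2.2))
    (h00int : Integrable (fun r : α × α => f r.1 r.2 0 0) (μ.prod μ))
    (hC1 : ∀ᵐ r ∂μ.prod μ, ContDiff ℝ 1 (fun wz : ℝ × ℝ => f r.1 r.2 wz.1 wz.2))
    {M : ℝ} (hM : 0 ≤ M) {N : ℕ} {a b : Fin N → α → ℝ} {β : α → ℝ}
    (ha0 : ∀ i x, 0 ≤ a i x) (hb0 : ∀ i y, 0 ≤ b i y) (hβ0 : ∀ y, 0 ≤ β y)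
    (ha : ∀ i, MemLp (a i) q μ) (hb : ∀ i, Integrable (b i) μ) (hβ : Integrable β μ)
    (hbd : ∀ᵐ r ∂μ.prod μ, ∀ w z : ℝ, |z| ≤ M →
      |deriv (fun w' => f r.1 r.2 w' z) w| ≤ (∑ i, a i r.1 * b i r.2) + β r.2 * |w| ^ (p - 1))
    {ψ : α → ℝ} (hψ : MemLp ψ (ENNReal.ofReal p) μ) :
    ∀ᵐ x ∂μ, ∀ w, |w| ≤ M → Integrable (fun y => f x y w (ψ y)) μ := by
  have hψp : Integrable (fun y => |ψ y| ^ p) μ := by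
    simpa [ENNReal.toReal_ofReal (by linarith : 0 ≤ p)] using
      hψ.integrable_norm_rpow (by simp; linarith) ofReal_ne_top
  have hbd_swap := Measure.measurePreserving_swap.quasiMeasurePreserving.ae hbd
  filter_upwards [Measure.ae_ae_of_ae_prod hbd, Measure.ae_ae_of_ae_prod hbd_swap,
    Measure.ae_ae_of_ae_prod hC1, h00int.prod_right_ae] with x hbdx hbdx' hC1x h00x w hw
  have hdom : Integrable (fun y => |f x y 0 0| + ((∑ i, a i x * b i y) * M + β y * M ^ p)
      + (∑ i, a i y * |ψ y| * b i x + β x * |ψ y| ^ p)) μ :=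
    (h00x.abs.add (((integrable_finsetSum _ fun i _ => (hb i).const_mul (a i x)).mul_const M).add
      (hβ.mul_const _))).add ((integrable_finsetSum _ fun i _ =>
        (integrable_mul_abs_of_memLp hpq (ha i) hψ).mul_const (b i x)).add (hψp.const_mul (β x)))
  refine hdom.mono' (hfmeas.comp_aemeasurable ((aemeasurable_const.prodMk aemeasurable_id).prodMk
    (aemeasurable_const.prodMk hψ.1.aemeasurable))).aestronglyMeasurable ?_
  filter_upwards [hbdx, hbdx', hC1x] with y hy hy' hyC1
  have hA : 0 ≤ ∑ i, a i x * b i y := Finset.sum_nonneg fun i _ => mul_nonneg (ha0 i x) (hb0 i y)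
  have hsum : (∑ i, a i y * b i x) * |ψ y| = ∑ i, a i y * |ψ y| * b i x := by
    rw [Finset.sum_mul]; exact Finset.sum_congr rfl fun i _ => by ring
  calc ‖f x y w (ψ y)‖
      ≤ |f x y 0 0| + ((∑ i, a i x * b i y) * |w| + β y * |w| ^ p)
          + ((∑ i, a i y * b i x) * |ψ y| + β x * |ψ y| ^ p) :=
        abs_le_of_abs_partialDeriv_le (hyC1.differentiable one_ne_zero) hp (hβ0 y) (hβ0 x)
          (fun s => hy s 0 (by simpa using hM))
          (fun s => by simpa only [Prod.swap_prod_mk, ← hfsymm] using hy' s w hw)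
    _ ≤ _ := by rw [hsum]; gcongr; exact hβ0 y

lemma ae_forall_integrable_of_abs_deriv_le [SFinite μ] {p : ℝ} {q : ℝ≥0∞}
    (hp : 1 ≤ p) (hpq : (ENNReal.ofReal p)⁻¹ + q⁻¹ = 1) {f : α → α → ℝ → ℝ → ℝ}
    (hfsymm : ∀ x y w z, f x y w z = f y x z w)
    (hfmeas : Measurable (fun r : (α × α) × ℝ × ℝ => f r.1.1 r.1.2 r.2.1 r.2.2))
    (h00int : Integrable (fun r : α × α => f r.1 r.2 0 0) (μ.prod μ))
    (hC1 : ∀ᵐ r ∂μ.prod μ, ContDiff ℝ 1 (fun wz : ℝ × ℝ => f r.1 r.2 wz.1 wz.2))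
    (hderiv : ∀ M : ℝ, 0 < M →
      ∃ (N : ℕ) (a b : Fin N → α → ℝ) (β : α → ℝ),
        (∀ i x, 0 ≤ a i x) ∧ (∀ i y, 0 ≤ b i y) ∧ (∀ y, 0 ≤ β y) ∧
        (∀ i, MemLp (a i) q μ) ∧ (∀ i, Integrable (b i) μ) ∧ Integrable β μ ∧
        ∀ᵐ r ∂μ.prod μ, ∀ (w z : ℝ), |z| ≤ M →
          |deriv (fun w' => f r.1 r.2 w' z) w| ≤ (∑ i, a i r.1 * b i r.2) + β r.2 * |w| ^ (p - 1))
    {ψ : α → ℝ} (hψ : MemLp ψ (ENNReal.ofReal p) μ) :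
    ∀ᵐ x ∂μ, ∀ w, Integrable (fun y => f x y w (ψ y)) μ := by
  have hbounded (n : ℕ) :
      ∀ᵐ x ∂μ, ∀ w : ℝ, |w| ≤ n + 1 → Integrable (fun y => f x y w (ψ y)) μ := by
    obtain ⟨N, a, b, β, ha0, hb0, hβ0, ha, hb, hβ, hbd⟩ := hderiv (n + 1) (by positivity)
    exact ae_forall_integrable_of_abs_le_of_abs_deriv_le hp hpq hfsymm hfmeas h00int hC1
      (by positivity) ha0 hb0 hβ0 ha hb hβ hbd hψ
  filter_upwards [ae_all_iff.2 hbounded] with x hx w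
  exact hx ⌈|w|⌉₊ w ((Nat.le_ceil _).trans (by linarith))

end

theorem stmt_16_general (m : ℕ)
    (X : Set (Fin m → ℝ))
    (p : ℝ) (hp : 1 ≤ p) (q : ℝ≥0∞) (hpq : (ENNReal.ofReal p)⁻¹ + q⁻¹ = 1)
    (f : (Fin m → ℝ) → (Fin m → ℝ) → ℝ → ℝ → ℝ)
    -- p-regularity of f:
    (hfsymm : ∀ x y w z, f x y w z = f y x z w)
    (hfmeas : Measurable (fun r : ((Fin m → ℝ) × (Fin m → ℝ)) × ℝ × ℝ =>
      f r.1.1 r.1.2 r.2.1 r.2.2))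
    (h00int : Integrable (fun r : (Fin m → ℝ) × (Fin m → ℝ) => f r.1 r.2 0 0)
      ((volume.restrict X).prod (volume.restrict X)))
    (hC1 : ∀ᵐ r ∂((volume.restrict X).prod (volume.restrict X)),
      ContDiff ℝ 1 (fun wz : ℝ × ℝ => f r.1 r.2 wz.1 wz.2))
    (hderiv : ∀ M : ℝ, 0 < M →
      ∃ (N : ℕ) (a b : Fin N → (Fin m → ℝ) → ℝ) (β : (Fin m → ℝ) → ℝ),
        (∀ i x, 0 ≤ a i x) ∧ (∀ i y, 0 ≤ b i y) ∧ (∀ y, 0 ≤ β y) ∧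
        (∀ i, MemLp (a i) q (volume.restrict X)) ∧
        (∀ i, Integrable (b i) (volume.restrict X)) ∧
        Integrable β (volume.restrict X) ∧
        ∀ᵐ r ∂((volume.restrict X).prod (volume.restrict X)),
          ∀ (w z : ℝ), |z| ≤ M →
            |deriv (fun w' => f r.1 r.2 w' z) w| ≤
              (∑ i, a i r.1 * b i r.2) + β r.2 * |w| ^ (p - 1))
    -- the decomposition f = f̃ + g + g + h:
    (ftilde : (Fin m → ℝ) → (Fin m → ℝ) → ℝ → ℝ → ℝ)
    (hftconv : ∀ᵐ r ∂((volume.restrict X).prod (volume.restrict X)),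
      (∀ z : ℝ, ConvexOn ℝ Set.univ (fun w : ℝ => ftilde r.1 r.2 w z)) ∧
      (∀ w : ℝ, ConvexOn ℝ Set.univ (fun z : ℝ => ftilde r.1 r.2 w z)))
    (g : (Fin m → ℝ) → (Fin m → ℝ) → ℝ → ℝ)
    (hgmeas : Measurable (fun r : ((Fin m → ℝ) × (Fin m → ℝ)) × ℝ => g r.1.1 r.1.2 r.2))
    (h : (Fin m → ℝ) → (Fin m → ℝ) → ℝ)
    (hgbound : ∃ (α : (Fin m → ℝ) → ℝ) (C : ℝ), Integrable α (volume.restrict X) ∧ 0 < C ∧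
      ∀ᵐ x ∂(volume.restrict X), ∀ w : ℝ,
        ∫⁻ y, ENNReal.ofReal |g x y w| ∂(volume.restrict X) ≤
          ENNReal.ofReal (α x + C * |w| ^ p))
    (hgzero : ∀ᵐ x ∂(volume.restrict X), ∀ w : ℝ,
      ∫ y, g x y w ∂(volume.restrict X) = 0)
    (hdecomp : ∀ᵐ r ∂((volume.restrict X).prod (volume.restrict X)),
      ∀ w z : ℝ, f r.1 r.2 w z = ftilde r.1 r.2 w z + g r.1 r.2 w + g r.2 r.1 z + h r.1 r.2) :
    ∀ ψ : (Fin m → ℝ) → ℝ, MemLp ψ (ENNReal.ofReal p) (volume.restrict X) →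
      ∀ᵐ x ∂(volume.restrict X),
        ConvexOn ℝ Set.univ (fun w : ℝ => ∫ y, f x y w (ψ y) ∂(volume.restrict X)) := by
  intro ψ hψ
  obtain ⟨_, _, -, -, hgb⟩ := hgbound
  filter_upwards [ae_forall_integrable_of_abs_deriv_le hp hpq hfsymm hfmeas h00int hC1 hderiv hψ,
    hgb, hgzero, Measure.ae_ae_of_ae_prod hdecomp, Measure.ae_ae_of_ae_prod hftconv]
    with x hfint hgbx hg0 hdec hconv
  have hgint (w : ℝ) : Integrable (fun y => g x y w) (volume.restrict X) :=
    integrable_of_lintegral_ofReal_abs_le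
      (hgmeas.comp (measurable_prodMk_left.prodMk measurable_const)).aestronglyMeasurable (hgbx w)
  have hΦ : (fun w => ∫ y, f x y w (ψ y) ∂(volume.restrict X))
      = fun w => ∫ y, (f x y w (ψ y) - g x y w) ∂(volume.restrict X) := by
    funext w; rw [integral_sub (hfint w) (hgint w), hg0, sub_zero]
  rw [hΦ]
  refine integral_convexOn_of_integrand_ae convex_univ ?_ fun w _ => (hfint w).sub (hgint w)
  filter_upwards [hdec, hconv] with y hdy hcy
  have hsplit : (fun w => f x y w (ψ y) - g x y w)
      = fun w => ftilde x y w (ψ y) + (g y x (ψ y) + h x y) := by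
    funext w; rw [hdy]; ring
  rw [hsplit]
  exact (hcy.1 (ψ y)).add_const _

theorem stmt_16 (m : ℕ) (hm : 0 < m)
    (X : Set (Fin m → ℝ)) (hXmeas : MeasurableSet X) (hXbdd : Bornology.IsBounded X)
    (p : ℝ) (hp : 1 ≤ p) (q : ℝ≥0∞) (hpq : (ENNReal.ofReal p)⁻¹ + q⁻¹ = 1)
    (f : (Fin m → ℝ) → (Fin m → ℝ) → ℝ → ℝ → ℝ)
    -- p-regularity of f:
    (hfsymm : ∀ x y w z, f x y w z = f y x z w)
    (hfmeas : Measurable (fun r : ((Fin m → ℝ) × (Fin m → ℝ)) × ℝ × ℝ =>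
      f r.1.1 r.1.2 r.2.1 r.2.2))
    (h00int : Integrable (fun r : (Fin m → ℝ) × (Fin m → ℝ) => f r.1 r.2 0 0)
      ((volume.restrict X).prod (volume.restrict X)))
    (hC1 : ∀ᵐ r ∂((volume.restrict X).prod (volume.restrict X)),
      ContDiff ℝ 1 (fun wz : ℝ × ℝ => f r.1 r.2 wz.1 wz.2))
    (hderiv : ∀ M : ℝ, 0 < M →
      ∃ (N : ℕ) (a b : Fin N → (Fin m → ℝ) → ℝ) (β : (Fin m → ℝ) → ℝ),
        (∀ i x, 0 ≤ a i x) ∧ (∀ i y, 0 ≤ b i y) ∧ (∀ y, 0 ≤ β y) ∧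
        (∀ i, MemLp (a i) q (volume.restrict X)) ∧
        (∀ i, Integrable (b i) (volume.restrict X)) ∧
        Integrable β (volume.restrict X) ∧
        ∀ᵐ r ∂((volume.restrict X).prod (volume.restrict X)),
          ∀ (w z : ℝ), |z| ≤ M →
            |deriv (fun w' => f r.1 r.2 w' z) w| ≤
              (∑ i, a i r.1 * b i r.2) + β r.2 * |w| ^ (p - 1))
    -- the decomposition f = f̃ + g + g + h:
    (ftilde : (Fin m → ℝ) → (Fin m → ℝ) → ℝ → ℝ → ℝ)
    (hftsymm : ∀ x y w z, ftilde x y w z = ftilde y x z w)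
    (hftmeas : Measurable (fun r : ((Fin m → ℝ) × (Fin m → ℝ)) × ℝ × ℝ =>
      ftilde r.1.1 r.1.2 r.2.1 r.2.2))
    (hftconv : ∀ᵐ r ∂((volume.restrict X).prod (volume.restrict X)),
      (∀ z : ℝ, ConvexOn ℝ Set.univ (fun w : ℝ => ftilde r.1 r.2 w z)) ∧
      (∀ w : ℝ, ConvexOn ℝ Set.univ (fun z : ℝ => ftilde r.1 r.2 w z)))
    (g : (Fin m → ℝ) → (Fin m → ℝ) → ℝ → ℝ)
    (hgmeas : Measurable (fun r : ((Fin m → ℝ) × (Fin m → ℝ)) × ℝ => g r.1.1 r.1.2 r.2))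
    (h : (Fin m → ℝ) → (Fin m → ℝ) → ℝ)
    (hhsymm : ∀ x y, h x y = h y x)
    (hhint : Integrable (fun r : (Fin m → ℝ) × (Fin m → ℝ) => h r.1 r.2)
      ((volume.restrict X).prod (volume.restrict X)))
    (hgbound : ∃ (α : (Fin m → ℝ) → ℝ) (C : ℝ), Integrable α (volume.restrict X) ∧ 0 < C ∧
      ∀ᵐ x ∂(volume.restrict X), ∀ w : ℝ,
        ∫⁻ y, ENNReal.ofReal |g x y w| ∂(volume.restrict X) ≤
          ENNReal.ofReal (α x + C * |w| ^ p))
    (hhzero : ∫ r, h r.1 r.2 ∂((volume.restrict X).prod (volume.restrict X)) = 0)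
    (hgzero : ∀ᵐ x ∂(volume.restrict X), ∀ w : ℝ,
      ∫ y, g x y w ∂(volume.restrict X) = 0)
    (hdecomp : ∀ᵐ r ∂((volume.restrict X).prod (volume.restrict X)),
      ∀ w z : ℝ, f r.1 r.2 w z = ftilde r.1 r.2 w z + g r.1 r.2 w + g r.2 r.1 z + h r.1 r.2) :
    ∀ ψ : (Fin m → ℝ) → ℝ, MemLp ψ (ENNReal.ofReal p) (volume.restrict X) →
      ∀ᵐ x ∂(volume.restrict X),
        ConvexOn ℝ Set.univ (fun w : ℝ => ∫ y, f x y w (ψ y) ∂(volume.restrict X)) :=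
  stmt_16_general m X p hp q hpq f hfsymm hfmeas h00int hC1 hderiv ftilde hftconv g hgmeas h hgbound
    hgzero hdecomp
end
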